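/- arXiv:2312.14296 — 8 statements merged into one kernel-verified Lean document; each statement's English description precedes it below -/
import Mathlib

section
/- Let X be a uniformly fine graph. For every edge e and every θ > 0, the cone Cone_θ(e) is finite, and its cardinality is bounded above by a function depending only on θ and the uniform finesse function of X. -/
def SimpleGraph.avoid {V : Type*} (G : SimpleGraph V) (v : V) : SimpleGraph V where
  Adj a b := G.Adj a b ∧ a ≠ v ∧ b ≠ v
  symm := ⟨fun a b h => ⟨h.1.symm, h.2.2, h.2.1⟩⟩
  loopless := ⟨fun a h => G.loopless.irrefl a h.1⟩

noncomputable def SimpleGraph.angleE {V : Type*} [DecidableEq V] (G : SimpleGraph V)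
    (v : V) (f g : Sym2 V) : ℕ∞ :=
  if h : v ∈ f ∧ v ∈ g then (G.avoid v).edist (Sym2.Mem.other' h.1) (Sym2.Mem.other' h.2)
  else ⊤

def SimpleGraph.coneEdges {V : Type*} [DecidableEq V] (G : SimpleGraph V)
    (θ : ℕ) (e : Sym2 V) : Set (Sym2 V) :=
  {e' | ∃ l : List (Sym2 V), l.head? = some e ∧ l.getLast? = some e' ∧
    l.length ≤ θ + 1 ∧ (∀ f ∈ l, f ∈ G.edgeSet) ∧
    l.Chain' (fun f g => ∃ v, v ∈ f ∧ v ∈ g ∧ G.angleE v f g ≤ θ)}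

def SimpleGraph.coneVerts {V : Type*} [DecidableEq V] (G : SimpleGraph V)
    (θ : ℕ) (e : Sym2 V) : Set V :=
  {x | ∃ e' ∈ G.coneEdges θ e, x ∈ e'}

/-- `G` is uniformly fine with finesse function `φ`: for every `L` and every edge
`e`, the set of simple simplicial loops (cycles) of length at most `L` through
`e` is finite, of cardinality at most `φ L`. -/
def SimpleGraph.UniformlyFine {V : Type*} (G : SimpleGraph V) (φ : ℕ → ℕ) : Prop :=
  ∀ (L : ℕ) (e : Sym2 V), e ∈ G.edgeSet →
    {c : (v : V) × G.Walk v v | c.2.IsCycle ∧ c.2.length ≤ L ∧ e ∈ c.2.edges}.Finite ∧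
    {c : (v : V) × G.Walk v v | c.2.IsCycle ∧ c.2.length ≤ L ∧ e ∈ c.2.edges}.ncard ≤ φ L

open SimpleGraph

namespace ConeProof

variable {V : Type} [DecidableEq V] {G : SimpleGraph V}

lemma walk_support_ne {v : V} : ∀ {a b : V} (p : (G.avoid v).Walk a b), a ≠ v →
    ∀ x ∈ p.support, x ≠ v
  | _, _, .nil, ha, x, hx => by
      simp only [SimpleGraph.Walk.support_nil, List.mem_singleton] at hx
      subst hx; exact ha
  | _, _, .cons h p, ha, x, hx => by
      rw [SimpleGraph.Walk.support_cons, List.mem_cons] at hx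
      rcases hx with rfl | hx
      · exact ha
      · exact walk_support_ne p h.2.2 x hx

lemma exists_cycle (θ : ℕ) {f g : Sym2 V} (hf : f ∈ G.edgeSet) (hg : g ∈ G.edgeSet)
    {v : V} (hvf : v ∈ f) (hvg : v ∈ g) (hfg : f ≠ g)
    (hθ : G.angleE v f g ≤ θ) :
    ∃ c : (w : V) × G.Walk w w, c.2.IsCycle ∧ c.2.length ≤ θ + 2 ∧
      f ∈ c.2.edges ∧ g ∈ c.2.edges := by
  classical
  have hθ' : (G.avoid v).edist (Sym2.Mem.other' hvf) (Sym2.Mem.other' hvg) ≤ (θ : ℕ∞) := by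
    have := hθ
    rw [SimpleGraph.angleE, dif_pos ⟨hvf, hvg⟩] at this
    exact this
  set a := Sym2.Mem.other' hvf with ha
  set b := Sym2.Mem.other' hvg with hb
  have hfa : s(v, a) = f := Sym2.other_spec' hvf
  have hgb : s(v, b) = g := Sym2.other_spec' hvg
  have hab : a ≠ b := fun h => hfg (by rw [← hfa, ← hgb, h])
  have hadj_va : G.Adj v a := by rw [← SimpleGraph.mem_edgeSet, hfa]; exact hf
  have hadj_vb : G.Adj v b := by rw [← SimpleGraph.mem_edgeSet, hgb]; exact hg
  have hav : a ≠ v := hadj_va.ne.symm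
  have hbv : b ≠ v := hadj_vb.ne.symm
  have hne : (G.avoid v).edist a b ≠ ⊤ := fun h => by
    rw [h] at hθ'
    exact (ENat.coe_lt_top θ).not_ge hθ'
  obtain ⟨q, hq⟩ := SimpleGraph.exists_walk_of_edist_ne_top hne
  have hqlen : q.length ≤ θ := by
    have : (q.length : ℕ∞) ≤ (θ : ℕ∞) := by rw [hq]; exact hθ'
    exact_mod_cast this
  set p := q.bypass with hp
  have hppath : p.IsPath := q.bypass_isPath
  have hplen : p.length ≤ θ := (q.length_bypass_le).trans hqlen
  have hvp : v ∉ p.support := fun h => walk_support_ne p hav v h rfl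
  have hsub : ∀ e ∈ p.edges, e ∈ G.edgeSet := by
    intro e he
    have := p.edges_subset_edgeSet he
    induction e with
    | _ x y => exact G.mem_edgeSet.mpr ((G.avoid v).mem_edgeSet.mp this).1
  set pG := p.transfer G hsub with hpG
  have hpGpath : pG.IsPath := hppath.transfer hsub
  have hvpG : v ∉ pG.support := by rwa [hpG, SimpleGraph.Walk.support_transfer]
  set p2 := pG.concat hadj_vb.symm with hp2
  have hp2path : p2.IsPath := by
    rw [SimpleGraph.Walk.isPath_def, hp2, SimpleGraph.Walk.support_concat]
    simp [List.nodup_append, hpGpath.support_nodup, hvpG]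
    exact fun x hx h => hvpG (h ▸ hx)
  have hfnot : s(v, a) ∉ p2.edges := by
    rw [hp2, SimpleGraph.Walk.edges_concat, List.concat_eq_append]
    intro hmem
    rcases List.mem_append.mp hmem with h1 | h2
    · exact hvpG (SimpleGraph.Walk.fst_mem_support_of_mem_edges pG h1)
    · rw [List.mem_singleton] at h2
      rcases Sym2.eq_iff.mp h2 with ⟨h3, _⟩ | ⟨_, h4⟩
      · exact hbv h3.symm
      · exact hab h4
  refine ⟨⟨v, SimpleGraph.Walk.cons hadj_va p2⟩, ?_, ?_, ?_, ?_⟩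
  · exact (SimpleGraph.Walk.cons_isCycle_iff p2 hadj_va).mpr ⟨hp2path, hfnot⟩
  · rw [SimpleGraph.Walk.length_cons, hp2, SimpleGraph.Walk.length_concat, hpG,
      SimpleGraph.Walk.length_transfer]
    omega
  · rw [SimpleGraph.Walk.edges_cons, hfa.symm]
    exact List.mem_cons_self
  · rw [SimpleGraph.Walk.edges_cons]
    refine List.mem_cons_of_mem _ ?_
    rw [hp2, SimpleGraph.Walk.edges_concat, List.concat_eq_append]
    refine List.mem_append_right _ ?_
    rw [List.mem_singleton]
    exact hgb.symm.trans Sym2.eq_swap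


/-- The set of edges at angle at most `θ` from `f`. -/
def ball (G : SimpleGraph V) (θ : ℕ) (f : Sym2 V) : Set (Sym2 V) :=
  {g | g ∈ G.edgeSet ∧ ∃ v, v ∈ f ∧ v ∈ g ∧ G.angleE v f g ≤ θ}

lemma ball_subset_edgeSet (θ : ℕ) (f : Sym2 V) : ball G θ f ⊆ G.edgeSet :=
  fun _ hg => hg.1

lemma self_mem_ball (θ : ℕ) {f : Sym2 V} (hf : f ∈ G.edgeSet) : f ∈ ball G θ f := by
  obtain ⟨v, hv⟩ : ∃ v, v ∈ f := ⟨f.out.1, f.out_fst_mem⟩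
  refine ⟨hf, v, hv, hv, ?_⟩
  rw [SimpleGraph.angleE, dif_pos ⟨hv, hv⟩]
  simp

lemma ball_bound {φ : ℕ → ℕ} (hU : G.UniformlyFine φ) (θ : ℕ) {f : Sym2 V}
    (hf : f ∈ G.edgeSet) :
    (ball G θ f).Finite ∧ (ball G θ f).ncard ≤ 1 + φ (θ + 2) * (θ + 2) := by
  classical
  obtain ⟨hCfin, hCcard⟩ := hU (θ + 2) f hf
  set T : Finset (Sym2 V) :=
    insert f (hCfin.toFinset.biUnion fun c => c.2.edges.toFinset) with hT
  have hsub : ball G θ f ⊆ ↑T := by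
    rintro g ⟨hg, v, hvf, hvg, hθ⟩
    by_cases hfg : f = g
    · subst hfg; simp [hT]
    · obtain ⟨c, hc1, hc2, hc3, hc4⟩ := exists_cycle θ hf hg hvf hvg hfg hθ
      rw [hT]
      refine Finset.mem_insert_of_mem (Finset.mem_biUnion.mpr ⟨c, ?_, ?_⟩)
      · rw [Set.Finite.mem_toFinset]; exact ⟨hc1, hc2, hc3⟩
      · exact List.mem_toFinset.mpr hc4
  refine ⟨Set.Finite.subset T.finite_toSet hsub, ?_⟩
  have h1 : (ball G θ f).ncard ≤ T.card := by
    rw [← Set.ncard_coe_finset]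
    exact Set.ncard_le_ncard hsub T.finite_toSet
  refine h1.trans ?_
  rw [hT]
  refine (Finset.card_insert_le _ _).trans ?_
  rw [Nat.add_comm]
  refine Nat.add_le_add_left ?_ 1
  refine (Finset.card_biUnion_le_card_mul _ _ (θ + 2) ?_).trans ?_
  · intro c hc
    rw [Set.Finite.mem_toFinset] at hc
    exact (c.2.edges.toFinset_card_le).trans (by rw [SimpleGraph.Walk.length_edges]; exact hc.2.1)
  · have : hCfin.toFinset.card ≤ φ (θ + 2) := by
      rw [Set.ncard_eq_toFinset_card _ hCfin] at hCcard; exact hCcard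
    exact Nat.mul_le_mul_right _ this

lemma ncard_biUnion_le {α β : Type*} {s : Set α} (t : α → Set β) (hs : s.Finite) (m : ℕ)
    (hm : ∀ a ∈ s, (t a).ncard ≤ m) : (⋃ a ∈ s, t a).ncard ≤ s.ncard * m := by
  classical
  refine Set.Finite.induction_on_subset _ hs (by simp) ?_
  intro a u haS huS hau ih
  have heq : (⋃ x ∈ insert a u, t x) = t a ∪ ⋃ x ∈ u, t x := by
    simp [Set.biUnion_insert]
  rw [heq]
  refine (Set.ncard_union_le _ _).trans ?_
  have h1 : (t a).ncard ≤ m := hm a haS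
  have h3 : (insert a u).ncard = u.ncard + 1 :=
    Set.ncard_insert_of_notMem hau (hs.subset huS)
  rw [h3]; nlinarith

/-- Iterated balls. -/
def nball (G : SimpleGraph V) (θ : ℕ) (f : Sym2 V) : ℕ → Set (Sym2 V)
  | 0 => {f}
  | k + 1 => ⋃ g ∈ nball G θ f k, ball G θ g

lemma nball_subset_edgeSet (θ : ℕ) {f : Sym2 V} (hf : f ∈ G.edgeSet) :
    ∀ k, nball G θ f k ⊆ G.edgeSet
  | 0 => by simpa [nball] using hf
  | k + 1 => by
      simp only [nball]
      exact Set.iUnion₂_subset fun g _ => ball_subset_edgeSet θ g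

lemma nball_succ_subset (θ : ℕ) {f : Sym2 V} (hf : f ∈ G.edgeSet) :
    ∀ k, nball G θ f k ⊆ nball G θ f (k + 1)
  | 0 => by
      intro x hx
      simp only [nball] at hx ⊢
      rcases hx with rfl
      exact Set.mem_biUnion (Set.mem_singleton x) (self_mem_ball θ hf)
  | k + 1 => by
      simp only [nball]
      exact Set.iUnion₂_mono' fun g hg =>
        ⟨g, nball_succ_subset θ hf k hg, subset_rfl⟩

lemma nball_mono (θ : ℕ) {f : Sym2 V} (hf : f ∈ G.edgeSet) {k m : ℕ} (h : k ≤ m) :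
    nball G θ f k ⊆ nball G θ f m := by
  induction h with
  | refl => exact subset_rfl
  | step h ih => exact ih.trans (nball_succ_subset θ hf _)

lemma nball_ball_subset (θ : ℕ) {f g : Sym2 V} (hg : g ∈ ball G θ f) :
    ∀ k, nball G θ g k ⊆ nball G θ f (k + 1)
  | 0 => by
      intro x hx
      simp only [nball] at hx
      rcases hx with rfl
      simp only [nball]
      exact Set.mem_biUnion (show f ∈ nball G θ f 0 from rfl) hg
  | k + 1 => by
      simp only [nball]
      exact Set.iUnion₂_mono' fun h hh =>
        ⟨h, nball_ball_subset θ hg k hh, subset_rfl⟩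

lemma chain_mem_nball (θ : ℕ) :
    ∀ (l : List (Sym2 V)) (f e' : Sym2 V), l.head? = some f → l.getLast? = some e' →
      (∀ x ∈ l, x ∈ G.edgeSet) →
      l.Chain' (fun a b => ∃ v, v ∈ a ∧ v ∈ b ∧ G.angleE v a b ≤ θ) →
      e' ∈ nball G θ f (l.length - 1)
  | [], f, e', hh, _, _, _ => by simp at hh
  | [x], f, e', hh, hl, _, _ => by
      simp only [List.head?_cons, Option.some.injEq] at hh
      simp only [List.getLast?_singleton, Option.some.injEq] at hl
      subst hh; subst hl
      exact rfl
  | x :: y :: t, f, e', hh, hl, hmem, hch => by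
      simp only [List.head?_cons, Option.some.injEq] at hh
      subst hh
      have hch' := hch
      rw [List.Chain', List.isChain_cons_cons] at hch'
      obtain ⟨hrel, hch2⟩ := hch'
      have hlast : (y :: t).getLast? = some e' := by
        rwa [List.getLast?_cons_cons] at hl
      have hmem2 : ∀ x ∈ y :: t, x ∈ G.edgeSet := fun z hz =>
        hmem z (List.mem_cons_of_mem _ hz)
      have ih := chain_mem_nball θ (y :: t) y e' rfl hlast hmem2 hch2
      have hyball : y ∈ ball G θ x :=
        ⟨hmem2 y (List.mem_cons_self), hrel⟩
      have := nball_ball_subset θ hyball ((y :: t).length - 1) ih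
      have hlen : (y :: t).length - 1 + 1 = (x :: y :: t).length - 1 := by
        simp
      rwa [hlen] at this

lemma nball_bound {φ : ℕ → ℕ} (hU : G.UniformlyFine φ) (θ : ℕ) {f : Sym2 V}
    (hf : f ∈ G.edgeSet) :
    ∀ k, (nball G θ f k).Finite ∧
      (nball G θ f k).ncard ≤ (1 + φ (θ + 2) * (θ + 2)) ^ k
  | 0 => by simp [nball]
  | k + 1 => by
      obtain ⟨hfin, hcard⟩ := nball_bound hU θ hf k
      have hsubE := nball_subset_edgeSet θ hf k
      constructor
      · simp only [nball]
        exact Set.Finite.biUnion hfin fun g hg => (ball_bound hU θ (hsubE hg)).1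
      · simp only [nball]
        refine (ncard_biUnion_le _ hfin (1 + φ (θ + 2) * (θ + 2))
          (fun g hg => (ball_bound hU θ (hsubE hg)).2)).trans ?_
        rw [pow_succ]
        exact Nat.mul_le_mul_right _ hcard

end ConeProof

/-- In a uniformly fine graph, every cone `Cone_θ(e)` is finite, with cardinality
bounded above by a function depending only on `θ` and the finesse function `φ`. -/
theorem cones_uniformly_finite (φ : ℕ → ℕ) :
    ∃ ψ : ℕ → ℕ, ∀ (V : Type) [DecidableEq V] (G : SimpleGraph V),
      G.UniformlyFine φ → ∀ (θ : ℕ) (e : Sym2 V), e ∈ G.edgeSet →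
        (G.coneEdges θ e).Finite ∧ (G.coneVerts θ e).Finite ∧
        (G.coneEdges θ e).ncard ≤ ψ θ ∧ (G.coneVerts θ e).ncard ≤ ψ θ := by
  refine ⟨fun θ => 2 * (1 + φ (θ + 2) * (θ + 2)) ^ θ, ?_⟩
  intro V _ G hU θ e he
  have hcone : G.coneEdges θ e ⊆ ConeProof.nball G θ e θ := by
    rintro e' ⟨l, hh, hl, hlen, hmem, hch⟩
    have h1 := ConeProof.chain_mem_nball θ l e e' hh hl hmem hch
    exact ConeProof.nball_mono θ he (by omega : l.length - 1 ≤ θ) h1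
  obtain ⟨hnfin, hncard⟩ := ConeProof.nball_bound hU θ he θ
  have hconeFin : (G.coneEdges θ e).Finite := hnfin.subset hcone
  have hconeCard : (G.coneEdges θ e).ncard ≤ (1 + φ (θ + 2) * (θ + 2)) ^ θ :=
    (Set.ncard_le_ncard hcone hnfin).trans hncard
  have hvertsEq : G.coneVerts θ e = ⋃ e' ∈ G.coneEdges θ e, {x | x ∈ e'} := by
    ext x; simp [SimpleGraph.coneVerts, Set.mem_iUnion]
  have hsym : ∀ e' : Sym2 V, ({x | x ∈ e'} : Set V).Finite ∧
      ({x | x ∈ e'} : Set V).ncard ≤ 2 := by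
    intro e'
    induction e' with
    | _ a b =>
      have h : ({x | x ∈ s(a, b)} : Set V) = {a, b} := by
        ext x; simp [Sym2.mem_iff]
      rw [h]
      exact ⟨(Set.finite_singleton b).insert a,
        (Set.ncard_insert_le _ _).trans (by simp)⟩
  have hvfin : (G.coneVerts θ e).Finite := by
    rw [hvertsEq]; exact Set.Finite.biUnion hconeFin fun e' _ => (hsym e').1
  have hvcard : (G.coneVerts θ e).ncard ≤ (1 + φ (θ + 2) * (θ + 2)) ^ θ * 2 := by
    rw [hvertsEq]
    exact (ConeProof.ncard_biUnion_le _ hconeFin 2 fun e' _ => (hsym e').2).trans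
      (Nat.mul_le_mul_right _ hconeCard)
  refine ⟨hconeFin, hvfin, ?_, ?_⟩
  · show (G.coneEdges θ e).ncard ≤ 2 * (1 + φ (θ + 2) * (θ + 2)) ^ θ
    omega
  · show (G.coneVerts θ e).ncard ≤ 2 * (1 + φ (θ + 2) * (θ + 2)) ^ θ
    omega
end

section
/- Let X be a uniformly fine δ-hyperbolic graph. Then for all vertices x, x', the cardinality of the geodesic interval I(x,x') = {a : d(x,a)+d(a,x') = d(x,x')} is bounded above by a function depending only on d(x,x'), δ, and the uniform finesse function of X. -/
def SimpleGraph.SlimTriangles {V : Type*} (G : SimpleGraph V) (δ : ℕ) : Prop :=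
  ∀ (a b c : V) (p : G.Walk a b) (q : G.Walk b c) (r : G.Walk a c),
    p.length = G.dist a b → q.length = G.dist b c → r.length = G.dist a c →
    ∀ x ∈ r.support, ∃ y, (y ∈ p.support ∨ y ∈ q.support) ∧ G.dist x y ≤ δ

open Set SimpleGraph

namespace IntervalAux

variable {V : Type} {G : SimpleGraph V}

lemma cycle_aux {s z y : V} (h1 : G.Adj s z) (h2 : G.Adj y s) (P : G.Walk z y)
    (hP : P.IsPath) (hs : s ∉ P.support) (hzy : z ≠ y) :
    (SimpleGraph.Walk.cons h1 (P.concat h2)).IsCycle := by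
  constructor
  · constructor
    · constructor
      simp only [Walk.edges_cons, Walk.edges_concat, List.concat_eq_append]
      rw [List.nodup_cons, List.mem_append]
      refine ⟨?_, ?_⟩
      · rintro (hmem | hmem)
        · exact hs (P.fst_mem_support_of_mem_edges hmem)
        · simp only [List.mem_singleton, Sym2.eq_iff] at hmem
          rcases hmem with ⟨rfl, rfl⟩ | ⟨-, rfl⟩
          · exact G.irrefl h1
          · exact hzy rfl
      · rw [List.nodup_append]
        refine ⟨hP.edges_nodup, List.nodup_singleton _, ?_⟩
        intro e he
        simp only [List.mem_singleton]
        rintro _ rfl rfl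
        exact hs (P.snd_mem_support_of_mem_edges he)
    · simp
  · simp only [Walk.support_cons, List.tail_cons, Walk.support_concat,
      List.concat_eq_append]
    rw [List.nodup_append]
    exact ⟨hP.support_nodup, List.nodup_singleton _, by
      intro a ha b hb hab; rw [List.mem_singleton] at hb; subst hb; subst hab; exact hs ha⟩

lemma branch_bound {φ : ℕ → ℕ} (hfine : G.UniformlyFine φ) (s t : V) (L : ℕ) :
    {z : V | G.Adj s z ∧ ∃ p : G.Walk z t, p.IsPath ∧ p.length ≤ L ∧ s ∉ p.support}.encard
      ≤ ((φ (2*L+2) + 2 : ℕ) : ℕ∞) := by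
  classical
  set Z := {z : V | G.Adj s z ∧ ∃ p : G.Walk z t, p.IsPath ∧ p.length ≤ L ∧ s ∉ p.support}
    with hZ
  rcases Z.eq_empty_or_nonempty with h | ⟨z₀, hz₀⟩
  · simp [h]
  obtain ⟨ha₀, p₀, hp₀, hl₀, hs₀⟩ := hz₀
  have hst : s ≠ t := by
    rintro rfl
    exact hs₀ p₀.end_mem_support
  have hex : ∃ (y : V) (h : G.Adj s y) (r' : G.Walk y t),
      r'.IsPath ∧ s ∉ r'.support ∧ r'.length ≤ L := by
    have hr_path : (Walk.cons ha₀ p₀).bypass.IsPath := Walk.bypass_isPath _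
    have hr_len : (Walk.cons ha₀ p₀).bypass.length ≤ L + 1 := by
      calc (Walk.cons ha₀ p₀).bypass.length ≤ (Walk.cons ha₀ p₀).length :=
            Walk.length_bypass_le _
      _ = p₀.length + 1 := by simp
      _ ≤ L + 1 := by omega
    revert hr_path hr_len
    generalize (Walk.cons ha₀ p₀).bypass = r
    cases r with
    | nil => exact fun _ _ => absurd rfl hst
    | @cons _ y _ h r' =>
      intro hr_path hr_len
      rw [Walk.cons_isPath_iff] at hr_path
      refine ⟨y, h, r', hr_path.1, hr_path.2, ?_⟩
      simp only [Walk.length_cons] at hr_len; omega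
  obtain ⟨y, h, r', hr'_path, hsr', hr'_len⟩ := hex
  -- the cycle set
  obtain ⟨hCfin, hCcard⟩ := hfine (2*L+2) s(y,s) (by rw [mem_edgeSet]; exact h.symm)
  set Cyc := {c : (v : V) × G.Walk v v |
      c.2.IsCycle ∧ c.2.length ≤ 2*L+2 ∧ s(y,s) ∈ c.2.edges} with hCyc
  have key : ∀ z ∈ Z \ {y}, ∃ c : (v : V) × G.Walk v v, c ∈ Cyc ∧
      c.2.support.tail.head? = some z := by
    rintro z ⟨⟨hadj, p, hp_path, hp_len, hp_s⟩, hzy⟩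
    simp only [mem_singleton_iff] at hzy
    set P : G.Walk z y := (p.append r'.reverse).bypass with hPdef
    have hP_path : P.IsPath := Walk.bypass_isPath _
    have hP_s : s ∉ P.support := by
      intro hmem
      have := Walk.support_bypass_subset _ hmem
      rw [Walk.mem_support_append_iff] at this
      rcases this with h' | h'
      · exact hp_s h'
      · rw [Walk.support_reverse, List.mem_reverse] at h'
        exact hsr' h'
    have hP_len : P.length ≤ 2*L := by
      calc P.length ≤ (p.append r'.reverse).length := Walk.length_bypass_le _
      _ = p.length + r'.length := by rw [Walk.length_append, Walk.length_reverse]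
      _ ≤ 2*L := by omega
    refine ⟨⟨s, Walk.cons hadj (P.concat h.symm)⟩, ⟨?_, ?_, ?_⟩, ?_⟩
    · exact cycle_aux hadj h.symm P hP_path hP_s hzy
    · simp only [Walk.length_cons, Walk.length_concat]
      omega
    · simp [Walk.edges_cons, Walk.edges_concat]
    · simp only [Walk.support_cons, List.tail_cons, Walk.support_concat,
        List.concat_eq_append]
      rw [P.support_eq_cons]
      simp
      rw [P.support_eq_cons]; rfl
  have : Nonempty ((v : V) × G.Walk v v) := ⟨⟨s, Walk.nil⟩⟩
  choose! f hf using key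
  have hinj : InjOn f (Z \ {y}) := by
    intro z₁ h₁ z₂ h₂ heq
    have e₁ := (hf z₁ h₁).2
    have e₂ := (hf z₂ h₂).2
    rw [heq] at e₁
    rw [e₁] at e₂
    exact Option.some.inj e₂
  have hmaps : MapsTo f (Z \ {y}) Cyc := fun z hz => (hf z hz).1
  have h1 : (Z \ {y}).encard ≤ Cyc.encard := encard_le_encard_of_injOn hmaps hinj
  have h2 : Cyc.encard ≤ ((φ (2*L+2) : ℕ) : ℕ∞) := by
    rw [← hCfin.cast_ncard_eq]
    exact_mod_cast hCcard
  calc Z.encard ≤ (insert y (Z \ {y})).encard := by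
        apply encard_mono; intro z hz
        by_cases hzy : z = y
        · exact hzy ▸ mem_insert _ _
        · exact mem_insert_of_mem _ ⟨hz, hzy⟩
  _ ≤ (Z \ {y}).encard + 1 := encard_insert_le _ _
  _ ≤ ((φ (2*L+2) : ℕ) : ℕ∞) + 1 := by gcongr; exact h1.trans h2
  _ ≤ ((φ (2*L+2) + 2 : ℕ) : ℕ∞) := by
      push_cast
      gcongr
      norm_num



lemma encard_biUnion_le {ι α : Type*} {I : Set ι} (hI : I.Finite) (f : ι → Set α) (k : ℕ∞)
    (h : ∀ i ∈ I, (f i).encard ≤ k) : (⋃ i ∈ I, f i).encard ≤ I.encard * k := by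
  revert h
  refine Set.Finite.induction_on (motive := fun I _ => (∀ i ∈ I, (f i).encard ≤ k) →
    (⋃ i ∈ I, f i).encard ≤ I.encard * k) I hI (by simp) ?_
  intro a s ha hs ih h
  rw [biUnion_insert, encard_insert_of_notMem ha]
  calc (f a ∪ ⋃ i ∈ s, f i).encard ≤ (f a).encard + (⋃ i ∈ s, f i).encard :=
        encard_union_le _ _
  _ ≤ k + s.encard * k := by
      gcongr
      · exact h a (mem_insert _ _)
      · exact ih fun i hi => h i (mem_insert_of_mem _ hi)
  _ = (s.encard + 1) * k := by ring

/-- The recursive bound on the number of paths of length at most `L`. -/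
def pc (φ : ℕ → ℕ) : ℕ → ℕ
  | 0 => 1
  | (L+1) => 1 + (φ (2*L+2) + 2) * pc φ L

lemma length_zero_subsingleton (s t : V) :
    {p : G.Walk s t | p.length = 0}.Subsingleton := by
  intro p hp q hq
  cases p with
  | cons h p' => simp at hp
  | nil =>
    cases q with
    | cons h q' => simp at hq
    | nil => rfl

lemma paths_bound {φ : ℕ → ℕ} (hfine : G.UniformlyFine φ) :
    ∀ (L : ℕ) (s t : V),
      {p : G.Walk s t | p.IsPath ∧ p.length ≤ L}.encard ≤ ((pc φ L : ℕ) : ℕ∞) := by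
  intro L
  induction L with
  | zero =>
    intro s t
    have hsub : {p : G.Walk s t | p.IsPath ∧ p.length ≤ 0} ⊆ {p | p.length = 0} := by
      intro p hp; exact Nat.le_zero.mp hp.2
    calc {p : G.Walk s t | p.IsPath ∧ p.length ≤ 0}.encard
        ≤ {p : G.Walk s t | p.length = 0}.encard := encard_mono hsub
    _ ≤ 1 := by rw [encard_le_one_iff]; exact fun a b ha hb =>
          length_zero_subsingleton s t ha hb
    _ = ((pc φ 0 : ℕ) : ℕ∞) := by simp [pc]
  | succ L ih =>
    intro s t
    classical
    set Z := {z : V | G.Adj s z ∧ ∃ p : G.Walk z t, p.IsPath ∧ p.length ≤ L ∧ s ∉ p.support}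
      with hZdef
    have hZcard : Z.encard ≤ ((φ (2*L+2) + 2 : ℕ) : ℕ∞) := branch_bound hfine s t L
    have hZfin : Z.Finite := finite_of_encard_le_coe hZcard
    set C : V → Set (G.Walk s t) := fun z =>
      {p : G.Walk s t | p.IsPath ∧ p.length ≤ L + 1 ∧ p.support.tail.head? = some z}
      with hCdef
    have hsub : {p : G.Walk s t | p.IsPath ∧ p.length ≤ L + 1}
        ⊆ {p : G.Walk s t | p.length = 0} ∪ ⋃ z ∈ Z, C z := by
      rintro p ⟨hp_path, hp_len⟩
      cases p with
      | nil => exact Or.inl rfl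
      | @cons _ z _ h p' =>
        right
        rw [Walk.cons_isPath_iff] at hp_path
        rw [mem_iUnion₂]
        refine ⟨z, ⟨h, p', hp_path.1, by simpa using hp_len, hp_path.2⟩, ?_⟩
        refine ⟨Walk.cons_isPath_iff h p' |>.mpr hp_path, by simpa using hp_len, ?_⟩
        simp only [Walk.support_cons, List.tail_cons]
        rw [p'.support_eq_cons]
        rfl
    have hC : ∀ z ∈ Z, (C z).encard ≤ ((pc φ L : ℕ) : ℕ∞) := by
      rintro z ⟨hadj, -⟩
      have himg : C z ⊆ (fun p' : G.Walk z t => Walk.cons hadj p') ''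
          {p' : G.Walk z t | p'.IsPath ∧ p'.length ≤ L} := by
        rintro p ⟨hp_path, hp_len, hp_hd⟩
        cases p with
        | nil => simp at hp_hd
        | @cons _ z' _ h' p' =>
          have hz : z' = z := by
            simp only [Walk.support_cons, List.tail_cons] at hp_hd
            rw [p'.support_eq_cons] at hp_hd
            exact Option.some.inj hp_hd
          subst hz
          rw [Walk.cons_isPath_iff] at hp_path
          exact ⟨p', ⟨hp_path.1, by simpa using hp_len⟩, rfl⟩
      calc (C z).encard ≤ _ := encard_mono himg
      _ ≤ {p' : G.Walk z t | p'.IsPath ∧ p'.length ≤ L}.encard := encard_image_le _ _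
      _ ≤ ((pc φ L : ℕ) : ℕ∞) := ih z t
    calc {p : G.Walk s t | p.IsPath ∧ p.length ≤ L + 1}.encard
        ≤ ({p : G.Walk s t | p.length = 0} ∪ ⋃ z ∈ Z, C z).encard := encard_mono hsub
    _ ≤ {p : G.Walk s t | p.length = 0}.encard + (⋃ z ∈ Z, C z).encard :=
        encard_union_le _ _
    _ ≤ 1 + Z.encard * ((pc φ L : ℕ) : ℕ∞) := by
        gcongr
        · rw [encard_le_one_iff]
          exact fun a b ha hb => length_zero_subsingleton s t ha hb
        · exact encard_biUnion_le hZfin C _ hC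
    _ ≤ 1 + ((φ (2*L+2) + 2 : ℕ) : ℕ∞) * ((pc φ L : ℕ) : ℕ∞) := by gcongr
    _ = ((pc φ (L+1) : ℕ) : ℕ∞) := by
        rw [pc]; push_cast; ring

end IntervalAux

/-- In a uniformly fine `δ`-hyperbolic graph, the cardinality of the geodesic
interval `I(x,x') = {a | d(x,a) + d(a,x') = d(x,x')}` is bounded above by a
function depending only on `d(x,x')`, `δ` and the finesse function `φ`. -/
theorem interval_uniformly_finite (φ : ℕ → ℕ) (δ : ℕ) :
    ∃ ψ : ℕ → ℕ, ∀ (V : Type) (G : SimpleGraph V), G.Connected →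
      G.UniformlyFine φ → G.SlimTriangles δ → ∀ x x' : V,
        {a : V | G.dist x a + G.dist a x' = G.dist x x'}.Finite ∧
        {a : V | G.dist x a + G.dist a x' = G.dist x x'}.ncard ≤ ψ (G.dist x x') := by
  classical
  refine ⟨fun n => IntervalAux.pc φ n * (n + 1), ?_⟩
  intro V G hconn hfine _hslim x x'
  set n := G.dist x x' with hn
  set I := {a : V | G.dist x a + G.dist a x' = n} with hI
  set S := {p : G.Walk x x' | p.IsPath ∧ p.length ≤ n} with hSdef
  have hS : S.encard ≤ ((IntervalAux.pc φ n : ℕ) : ℕ∞) := IntervalAux.paths_bound hfine n x x'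
  have hSfin : S.Finite := Set.finite_of_encard_le_coe hS
  have hsub : I ⊆ ⋃ p ∈ S, {a : V | a ∈ p.support} := by
    intro a ha
    obtain ⟨p, hp⟩ := hconn.exists_walk_length_eq_dist x a
    obtain ⟨q, hq⟩ := hconn.exists_walk_length_eq_dist a x'
    have hw_len : (p.append q).length = n := by
      rw [SimpleGraph.Walk.length_append, hp, hq]; exact ha
    have hw_path : (p.append q).IsPath :=
      (p.append q).isPath_of_length_eq_dist (by rw [hw_len, hn])
    rw [Set.mem_iUnion₂]
    exact ⟨p.append q, ⟨hw_path, le_of_eq hw_len⟩,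
      by simp only [Set.mem_setOf_eq, SimpleGraph.Walk.mem_support_append_iff]; exact Or.inl p.end_mem_support⟩
  have hsupcard : ∀ p ∈ S, {a : V | a ∈ p.support}.encard ≤ ((n + 1 : ℕ) : ℕ∞) := by
    rintro p ⟨-, hp_len⟩
    have heq : {a : V | a ∈ p.support} = ↑p.support.toFinset := by
      ext a; simp
    rw [heq, Set.encard_coe_eq_coe_finsetCard]
    have h1 : p.support.toFinset.card ≤ p.support.length := p.support.toFinset_card_le
    have h2 : p.support.length = p.length + 1 := p.length_support
    exact_mod_cast by omega
  have hIenc : I.encard ≤ ((IntervalAux.pc φ n * (n + 1) : ℕ) : ℕ∞) := by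
    calc I.encard ≤ (⋃ p ∈ S, {a : V | a ∈ p.support}).encard := Set.encard_mono hsub
    _ ≤ S.encard * ((n + 1 : ℕ) : ℕ∞) := IntervalAux.encard_biUnion_le hSfin _ _ hsupcard
    _ ≤ ((IntervalAux.pc φ n : ℕ) : ℕ∞) * ((n + 1 : ℕ) : ℕ∞) := by gcongr
    _ = ((IntervalAux.pc φ n * (n + 1) : ℕ) : ℕ∞) := by push_cast; ring
  have hIfin : I.Finite := Set.finite_of_encard_le_coe hIenc
  refine ⟨hIfin, ?_⟩
  have := hIfin.cast_ncard_eq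
  rw [← this] at hIenc
  exact_mod_cast hIenc
end

section
/- Let X be a geodesic space in which geodesic triangles are δ-thin, and let γ, γ' : [0,T] → X be geodesics with γ(0) = γ'(0). If d(γ(t₀), im(γ')) ≤ K for some K > 0 and t₀ ∈ [0,T], then d(γ(t), γ'(t)) ≤ 2δ for all t ≤ t₀ − K − δ. -/
/-!
Let `γ' s'` be a point of `γ'` nearest to `γ t₀`, and apply thinness to the triangle with vertices
`γ 0`, `γ' s'`, `γ t₀`. A point `γ t` with `t ≤ t₀ - K - δ` is too far from `γ t₀` to be `δ`-close to
the short side `[γ' s', γ t₀]` anywhere except at its endpoint `γ' s'`, so it is `δ`-close to some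
`γ' s`. Both geodesics start at the same point, so `|t - s| ≤ δ`, and `d(γ t, γ' t) ≤ 2δ` follows.
-/

open Set

/-- `f` is a unit-speed geodesic segment of length `T` from `x` to `y`. -/
def IsGeodesicSeg {X : Type*} [MetricSpace X] (f : ℝ → X) (T : ℝ) (x y : X) : Prop :=
  f 0 = x ∧ f T = y ∧ ∀ s ∈ Icc (0:ℝ) T, ∀ t ∈ Icc (0:ℝ) T, dist (f s) (f t) = |s - t|

/-- `X` is a geodesic space: any two points are joined by a geodesic segment. -/
def IsGeodesicSpace (X : Type*) [MetricSpace X] : Prop :=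
  ∀ x y : X, ∃ f : ℝ → X, IsGeodesicSeg f (dist x y) x y

/-- Geodesic triangles in `X` are `δ`-thin: every side is contained in the
`δ`-neighbourhood of the union of the other two sides. -/
def ThinTriangles (X : Type*) [MetricSpace X] (δ : ℝ) : Prop :=
  ∀ (a b c : X) (p q r : ℝ → X) (Tp Tq Tr : ℝ),
    IsGeodesicSeg p Tp a b → IsGeodesicSeg q Tq b c → IsGeodesicSeg r Tr a c →
    ∀ t ∈ Icc (0:ℝ) Tr, ∃ u, (u ∈ p '' Icc (0:ℝ) Tp ∨ u ∈ q '' Icc (0:ℝ) Tq) ∧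
      dist (r t) u ≤ δ

namespace IsGeodesicSeg

variable {X : Type*} [MetricSpace X] {f : ℝ → X} {T : ℝ} {x y : X}

theorem dist_eq (hf : IsGeodesicSeg f T x y) {s t : ℝ} (hs : s ∈ Icc 0 T) (ht : t ∈ Icc 0 T) :
    dist (f s) (f t) = |s - t| :=
  hf.2.2 s hs t ht

theorem dist_start (hf : IsGeodesicSeg f T x y) {t : ℝ} (ht : t ∈ Icc 0 T) : dist x (f t) = t := by
  rw [← hf.1, hf.dist_eq ⟨le_rfl, ht.1.trans ht.2⟩ ht, zero_sub, abs_neg, abs_of_nonneg ht.1]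

theorem dist_end (hf : IsGeodesicSeg f T x y) {t : ℝ} (ht : t ∈ Icc 0 T) :
    dist (f t) y = T - t := by
  rw [← hf.2.1, hf.dist_eq ht ⟨ht.1.trans ht.2, le_rfl⟩, abs_of_nonpos (by linarith [ht.2]),
    neg_sub]

theorem restrict (hf : IsGeodesicSeg f T x y) {s : ℝ} (hs : s ≤ T) : IsGeodesicSeg f s x (f s) :=
  ⟨hf.1, rfl, fun _ ha _ hb => hf.dist_eq ⟨ha.1, ha.2.trans hs⟩ ⟨hb.1, hb.2.trans hs⟩⟩

theorem lipschitzOnWith (hf : IsGeodesicSeg f T x y) : LipschitzOnWith 1 f (Icc 0 T) :=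
  LipschitzOnWith.of_dist_le_mul fun _ ha _ hb => by
    rw [hf.dist_eq ha hb, NNReal.coe_one, one_mul, Real.dist_eq]

theorem isCompact_image (hf : IsGeodesicSeg f T x y) : IsCompact (f '' Icc 0 T) :=
  isCompact_Icc.image_of_continuousOn hf.lipschitzOnWith.continuousOn

theorem dist_le_two_mul_dist {g : ℝ → X} {z : X} (hf : IsGeodesicSeg f T x y)
    (hg : IsGeodesicSeg g T x z) {s t : ℝ} (hs : s ∈ Icc 0 T) (ht : t ∈ Icc 0 T) :
    dist (f t) (g t) ≤ 2 * dist (f t) (g s) := by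
  have hts : |t - s| ≤ dist (f t) (g s) := by
    have h := abs_dist_sub_le (f t) (g s) x
    rwa [dist_comm (f t), dist_comm (g s), hf.dist_start ht, hg.dist_start hs] at h
  calc dist (f t) (g t) ≤ dist (f t) (g s) + dist (g s) (g t) := dist_triangle _ _ _
    _ = dist (f t) (g s) + |t - s| := by rw [hg.dist_eq hs ht, abs_sub_comm]
    _ ≤ 2 * dist (f t) (g s) := by linarith

end IsGeodesicSeg

/-- Thinness applied to the triangle `p`, `q : b → c`, `r`: `r t` is too far from `c` to be
`δ`-close to any point of `q` other than `q 0 = b`. -/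
theorem ThinTriangles.exists_dist_le_of_le {X : Type*} [MetricSpace X] {δ : ℝ}
    (hthin : ThinTriangles X δ) (hX : IsGeodesicSpace X) {p r : ℝ → X} {a b c : X} {Tp Tr t : ℝ}
    (hp : IsGeodesicSeg p Tp a b) (hr : IsGeodesicSeg r Tr a c) (hTp : 0 ≤ Tp)
    (ht : t ∈ Icc 0 Tr) (htle : t ≤ Tr - dist b c - δ) :
    ∃ s ∈ Icc 0 Tp, dist (r t) (p s) ≤ δ := by
  obtain ⟨q, hq⟩ := hX b c
  obtain ⟨u, hu | ⟨v, hv, rfl⟩, hdu⟩ := hthin a b c p q r Tp _ Tr hp hq hr t ht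
  · obtain ⟨s, hs, rfl⟩ := hu
    exact ⟨s, hs, hdu⟩
  · have hfar : Tr - t ≤ δ + (dist b c - v) :=
      calc Tr - t = dist (r t) c := (hr.dist_end ht).symm
        _ ≤ dist (r t) (q v) + dist (q v) c := dist_triangle _ _ _
        _ ≤ δ + (dist b c - v) := by rw [hq.dist_end hv]; linarith
    have hv0 : v = 0 := le_antisymm (by linarith) hv.1
    refine ⟨Tp, ⟨hTp, le_rfl⟩, ?_⟩
    rwa [hp.2.1, ← hq.1, ← hv0]

theorem bridson_lemma_general {X : Type*} [MetricSpace X] (hX : IsGeodesicSpace X)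
    (δ : ℝ) (hδ : 0 ≤ δ) (hthin : ThinTriangles X δ)
    (T : ℝ) (γ γ' : ℝ → X)
    (hγ : IsGeodesicSeg γ T (γ 0) (γ T)) (hγ' : IsGeodesicSeg γ' T (γ' 0) (γ' T))
    (h0 : γ 0 = γ' 0)
    (K : ℝ) (t₀ : ℝ) (ht₀ : t₀ ∈ Icc (0:ℝ) T)
    (hclose : Metric.infDist (γ t₀) (γ' '' Icc (0:ℝ) T) ≤ K) :
    ∀ t ∈ Icc (0:ℝ) T, t ≤ t₀ - K - δ → dist (γ t) (γ' t) ≤ 2 * δ := by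
  intro t ht htle
  rw [← h0] at hγ'
  obtain ⟨_, ⟨s', hs', rfl⟩, hnearest⟩ := hγ'.isCompact_image.exists_infDist_eq_dist
    ((nonempty_Icc.2 (ht₀.1.trans ht₀.2)).image γ') (γ t₀)
  obtain ⟨s, hs, hds⟩ := hthin.exists_dist_le_of_le hX (hγ'.restrict hs'.2) (hγ.restrict ht₀.2)
    hs'.1 ⟨ht.1, by linarith [(Metric.infDist_nonneg).trans hclose]⟩
    (by rw [dist_comm, ← hnearest]; linarith)
  calc dist (γ t) (γ' t) ≤ 2 * dist (γ t) (γ' s) :=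
        hγ.dist_le_two_mul_dist hγ' ⟨hs.1, hs.2.trans hs'.2⟩ ht
    _ ≤ 2 * δ := by linarith

/-- (Bridson–Haefliger Lemma 1.15.) Let `X` be a geodesic space with `δ`-thin
geodesic triangles and `γ, γ' : [0,T] → X` unit-speed geodesics with
`γ 0 = γ' 0`. If `d(γ t₀, im γ') ≤ K` for some `K > 0` and `t₀ ∈ [0,T]`, then
`d(γ t, γ' t) ≤ 2δ` for all `t ≤ t₀ - K - δ`. -/
theorem bridson_lemma {X : Type*} [MetricSpace X] (hX : IsGeodesicSpace X)
    (δ : ℝ) (hδ : 0 ≤ δ) (hthin : ThinTriangles X δ)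
    (T : ℝ) (γ γ' : ℝ → X)
    (hγ : IsGeodesicSeg γ T (γ 0) (γ T)) (hγ' : IsGeodesicSeg γ' T (γ' 0) (γ' T))
    (h0 : γ 0 = γ' 0)
    (K : ℝ) (hK : 0 < K) (t₀ : ℝ) (ht₀ : t₀ ∈ Icc (0:ℝ) T)
    (hclose : Metric.infDist (γ t₀) (γ' '' Icc (0:ℝ) T) ≤ K) :
    ∀ t ∈ Icc (0:ℝ) T, t ≤ t₀ - K - δ → dist (γ t) (γ' t) ≤ 2 * δ :=
  bridson_lemma_general hX δ hδ hthin T γ γ' hγ hγ' h0 K t₀ ht₀ hclose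
end

section
/- Let X be a fine δ-hyperbolic graph and a, b, c vertices. Among the vertices v such that (1) v lies on every geodesic between a and b and on every geodesic between a and c, (2) ∠_v(a,b) > 50δ, and (3) ∠_v(a,c) > 50δ, if this set is nonempty then it contains a unique point at maximal distance from a. -/
noncomputable def SimpleGraph.angle {V : Type*} (G : SimpleGraph V) (v w w' : V) : ℕ∞ :=
  (G.avoid v).edist w w'

/-- The angle at `v` between `x` and `y` is greater than `θ`: there are edges at
`v` on geodesics from `v` towards `x` and `y` making an angle `> θ`. -/
def SimpleGraph.AngleGT {V : Type*} (G : SimpleGraph V) (v x y : V) (θ : ℕ) : Prop :=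
  ∃ w w', G.Adj v w ∧ G.Adj v w' ∧
    G.dist v x = G.dist w x + 1 ∧ G.dist v y = G.dist w' y + 1 ∧
    (θ : ℕ∞) < G.angle v w w'

/-- `G` is fine: for every edge and every `L`, there are only finitely many
simple simplicial loops of length at most `L` through that edge. -/
def SimpleGraph.Fine {V : Type*} (G : SimpleGraph V) : Prop :=
  ∀ (L : ℕ) (e : Sym2 V), e ∈ G.edgeSet →
    {c : (v : V) × G.Walk v v | c.2.IsCycle ∧ c.2.length ≤ L ∧ e ∈ c.2.edges}.Finite

/-- `v` lies on every geodesic between `a` and `b`, on every geodesic between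
`a` and `c`, and makes angles `> 50δ` at `v` between `a, b` and between `a, c`. -/
def SimpleGraph.BigAnglePt {V : Type*} (G : SimpleGraph V) (δ : ℕ) (a b c v : V) : Prop :=
  (∀ p : G.Walk a b, p.length = G.dist a b → v ∈ p.support) ∧
  (∀ p : G.Walk a c, p.length = G.dist a c → v ∈ p.support) ∧
  G.AngleGT v a b (50 * δ) ∧ G.AngleGT v a c (50 * δ)

lemma geo_split' {V : Type*} [DecidableEq V] (G : SimpleGraph V) (hc : G.Connected) {a b x : V} (p : G.Walk a b)
    (hp : p.length = G.dist a b) (hx : x ∈ p.support) :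
    (p.takeUntil x hx).length = G.dist a x ∧ (p.dropUntil x hx).length = G.dist x b ∧
    G.dist a x + G.dist x b = G.dist a b := by
  have h1 := SimpleGraph.dist_le (p.takeUntil x hx)
  have h2 := SimpleGraph.dist_le (p.dropUntil x hx)
  have h3 : (p.takeUntil x hx).length + (p.dropUntil x hx).length = p.length := by
    rw [← SimpleGraph.Walk.length_append, SimpleGraph.Walk.take_spec]
  have h4 : G.dist a b ≤ G.dist a x + G.dist x b := hc.dist_triangle
  omega

lemma geo_unique' {V : Type*} [DecidableEq V] (G : SimpleGraph V) (hc : G.Connected) {a b u v : V}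
    (p : G.Walk a b) (hp : p.length = G.dist a b) (hu : u ∈ p.support) (hv : v ∈ p.support)
    (huv : G.dist a u = G.dist a v) : u = v := by
  obtain ⟨hq, hr, hsum⟩ := geo_split' G hc p hp hv
  obtain ⟨_, _, hsumu⟩ := geo_split' G hc p hp hu
  have hmem : u ∈ (p.takeUntil v hv).support ∨ u ∈ (p.dropUntil v hv).support := by
    rw [← SimpleGraph.Walk.take_spec p hv, SimpleGraph.Walk.mem_support_append_iff] at hu
    exact hu
  have hz : G.dist u v = 0 := by
    rcases hmem with h | h
    · obtain ⟨_, h2, h3⟩ := geo_split' G hc (p.takeUntil v hv) hq h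
      omega
    · obtain ⟨h1, _, h3⟩ := geo_split' G hc (p.dropUntil v hv) hr h
      have hcomm : G.dist u v = G.dist v u := SimpleGraph.dist_comm
      omega
  exact (hc.dist_eq_zero_iff.mp hz)

/-- In a fine `δ`-hyperbolic graph, if the set of vertices `v` lying on every
geodesic between `a` and `b` and between `a` and `c` with `∠_v(a,b) > 50δ` and
`∠_v(a,c) > 50δ` is nonempty, then it contains a unique point at maximal
distance from `a`. -/
theorem bigAnglePt_unique_max {V : Type*} (G : SimpleGraph V) (hc : G.Connected)
    (hf : G.Fine) (δ : ℕ) (hδ : G.SlimTriangles δ) (a b c : V)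
    (hne : ∃ v, G.BigAnglePt δ a b c v) :
    ∃! v, G.BigAnglePt δ a b c v ∧ ∀ u, G.BigAnglePt δ a b c u →
      G.dist a u ≤ G.dist a v := by
  classical
  obtain ⟨v₀, hv₀⟩ := hne
  obtain ⟨p, hp⟩ := hc.exists_walk_length_eq_dist a b
  have hbound : ∀ u, G.BigAnglePt δ a b c u → G.dist a u ≤ G.dist a b := by
    intro u hu
    obtain ⟨_, _, h1⟩ := geo_split' G hc p hp (hu.1 p hp)
    omega
  set P : ℕ → Prop := fun n => ∃ u, G.BigAnglePt δ a b c u ∧ G.dist a u = n with hP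
  have hP0 : P (G.dist a v₀) := ⟨v₀, hv₀, rfl⟩
  have hPn : P (Nat.findGreatest P (G.dist a b)) :=
    Nat.findGreatest_spec (hbound v₀ hv₀) hP0
  obtain ⟨v, hv, hvd⟩ := hPn
  have hmax : ∀ u, G.BigAnglePt δ a b c u → G.dist a u ≤ G.dist a v := by
    intro u hu
    rw [hvd]
    exact Nat.le_findGreatest (hbound u hu) ⟨u, hu, rfl⟩
  refine ⟨v, ⟨hv, hmax⟩, ?_⟩
  rintro y ⟨hy, hymax⟩
  have heq : G.dist a y = G.dist a v := le_antisymm (hmax y hy) (hymax v hv)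
  exact geo_unique' G hc p hp (hy.1 p hp) (hv.1 p hp) heq
end

section
/- For a tree X and a basepoint x, the expression ‖Σ_a f(a)e_a‖²_{H_x} = Σ_{n∈ℕ} (n+1)² Σ_{k=0}^{n} Σ_{z∈S_x^k} |Σ_{a∈I_z^{n,k,x}} f(a)|² defines the square of a norm on the space ℂ^(X) of finitely supported functions from the vertex set of X to ℂ. -/
/-- The class `I_z^{n,k,x}` (with `k = d(x,z)`): points `a` at distance `n` from
`x` such that `z` lies on a geodesic from `x` to `a`. -/
def SimpleGraph.Icl {V : Type*} (G : SimpleGraph V) (x : V) (n : ℕ) (z : V) : Set V :=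
  {a | G.dist x a = n ∧ G.dist x z + G.dist z a = G.dist x a}

/-- The square of the Lafforgue norm based at `x`:
`‖f‖² = Σ_n (n+1)² Σ_{k=0}^n Σ_{z ∈ S_x^k} |Σ_{a ∈ I_z^{n,k,x}} f(a)|²`. -/
noncomputable def SimpleGraph.sqNormH {V : Type*} (G : SimpleGraph V) (x : V)
    (f : V →₀ ℂ) : ℝ :=
  ∑' n : ℕ, ((n + 1 : ℝ) ^ 2) * ∑ k ∈ Finset.range (n + 1),
    ∑' z : {z : V // G.dist x z = k},
      ‖∑ᶠ a ∈ G.Icl x n (z : V), f a‖ ^ 2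

namespace SqNormAux
open Function Set

variable {V : Type*}

theorem finsum_mem_eq_sum_of_support_subset (f : V → ℂ) {s S : Set V} (hS : S.Finite)
    (hsub : support f ⊆ S) :
    ∑ᶠ a ∈ s, f a = ∑ a ∈ (hS.inter_of_right s).toFinset, f a := by
  apply finsum_mem_eq_sum_of_inter_support_eq
  rw [Set.Finite.coe_toFinset]
  rw [Set.inter_assoc, Set.inter_eq_self_of_subset_right hsub]

theorem finsum_mem_finsupp_add (s : Set V) (f g : V →₀ ℂ) :
    ∑ᶠ a ∈ s, (f + g) a = (∑ᶠ a ∈ s, f a) + ∑ᶠ a ∈ s, g a := by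
  classical
  have hS : (Function.support f ∪ Function.support g : Set V).Finite :=
    f.finite_support.union g.finite_support
  rw [finsum_mem_eq_sum_of_support_subset (fun a => (f + g) a) hS
      (by intro a ha; by_contra h; simp only [Set.mem_union] at h
          push_neg at h; simp only [Function.mem_support, not_not, Finsupp.add_apply] at ha h
          exact ha (by rw [h.1, h.2, add_zero])),
    finsum_mem_eq_sum_of_support_subset (fun a => f a) hS Set.subset_union_left,
    finsum_mem_eq_sum_of_support_subset (fun a => g a) hS Set.subset_union_right,
    ← Finset.sum_add_distrib]
  rfl

theorem finsum_mem_finsupp_smul (s : Set V) (c : ℂ) (f : V →₀ ℂ) :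
    ∑ᶠ a ∈ s, (c • f) a = c * ∑ᶠ a ∈ s, f a := by
  classical
  have hS : (Function.support f : Set V).Finite := f.finite_support
  rw [finsum_mem_eq_sum_of_support_subset (fun a => (c • f) a) hS
      (by intro a ha; simp only [Function.mem_support, Finsupp.smul_apply] at ha ⊢
          intro h; exact ha (by rw [h, smul_zero])),
    finsum_mem_eq_sum_of_support_subset (fun a => f a) hS le_rfl,
    Finset.mul_sum]
  simp [Finsupp.smul_apply, smul_eq_mul]

end SqNormAux

namespace SqNormAux2
open SimpleGraph
variable {V : Type*} {G : SimpleGraph V}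

theorem geodesic_finite (hT : G.IsTree) (x a : V) :
    {z : V | G.dist x z + G.dist z a = G.dist x a}.Finite := by
  classical
  obtain ⟨p, hp, hup⟩ := hT.existsUnique_path x a
  apply Set.Finite.subset (p.support.finite_toSet)
  intro z hz
  simp only [Set.mem_setOf_eq] at hz
  obtain ⟨w1, hw1⟩ := (hT.isConnected.preconnected x z).exists_walk_length_eq_dist
  obtain ⟨w2, hw2⟩ := (hT.isConnected.preconnected z a).exists_walk_length_eq_dist
  have hlen : (w1.append w2).length = G.dist x a := by
    rw [SimpleGraph.Walk.length_append, hw1, hw2, hz]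
  have hpath : (w1.append w2).IsPath := SimpleGraph.Walk.isPath_of_length_eq_dist _ hlen
  have := hup (w1.append w2) hpath
  rw [← this]
  simp [SimpleGraph.Walk.mem_support_append_iff]

end SqNormAux2

namespace SqNormAux3
open SimpleGraph SqNormAux SqNormAux2
variable {V : Type*}

/-- The index type. -/
abbrev Idx (G : SimpleGraph V) (x : V) : Type _ :=
  Σ n : ℕ, Σ k : Fin (n + 1), {z : V // G.dist x z = (k : ℕ)}

noncomputable def Gfun (G : SimpleGraph V) (x : V) (f : V →₀ ℂ) (i : Idx G x) : ℂ :=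
  ((i.1 : ℂ) + 1) * ∑ᶠ a ∈ G.Icl x i.1 (i.2.2 : V), f a

theorem Gfun_add (G : SimpleGraph V) (x : V) (f g : V →₀ ℂ) :
    Gfun G x (f + g) = Gfun G x f + Gfun G x g := by
  funext i
  simp only [Gfun, Pi.add_apply, finsum_mem_finsupp_add]
  ring

theorem Gfun_smul (G : SimpleGraph V) (x : V) (c : ℂ) (f : V →₀ ℂ) :
    Gfun G x (c • f) = c • Gfun G x f := by
  funext i
  simp only [Gfun, Pi.smul_apply, finsum_mem_finsupp_smul, smul_eq_mul]
  ring

theorem Gfun_ne_zero {G : SimpleGraph V} {x : V} {f : V →₀ ℂ} {i : Idx G x}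
    (h : Gfun G x f i ≠ 0) :
    ∃ a, f a ≠ 0 ∧ G.dist x a = i.1 ∧
      G.dist x (i.2.2 : V) + G.dist (i.2.2 : V) a = G.dist x a := by
  by_contra hc
  push_neg at hc
  apply h
  have : ∑ᶠ a ∈ G.Icl x i.1 (i.2.2 : V), f a = 0 := by
    apply finsum_mem_of_eqOn_zero
    intro a ha
    obtain ⟨h1, h2⟩ := ha
    by_contra hfa
    exact (hc a hfa h1) h2
  rw [Gfun, this, mul_zero]

theorem support_Gfun_finite {G : SimpleGraph V} (hT : G.IsTree) (x : V) (f : V →₀ ℂ) :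
    (Function.support (Gfun G x f)).Finite := by
  classical
  set R : ℕ := f.support.sup (G.dist x) with hR
  set Z : Set V := ⋃ a ∈ (f.support : Set V), {z : V | G.dist x z + G.dist z a = G.dist x a}
    with hZ
  have hZfin : Z.Finite :=
    Set.Finite.biUnion f.support.finite_toSet (fun a _ => geodesic_finite hT x a)
  have hinj : Function.Injective
      (fun i : Idx G x => ((i.1, ((i.2.1 : ℕ), (i.2.2 : V))) : ℕ × ℕ × V)) := by
    rintro ⟨n, k, z⟩ ⟨n', k', z'⟩ hh
    simp only [Prod.mk.injEq] at hh
    obtain ⟨h1, h2, h3⟩ := hh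
    subst h1
    have hk : k = k' := Fin.ext h2
    subst hk
    have hz : z = z' := Subtype.ext h3
    subst hz
    rfl
  apply Set.Finite.subset
    (Set.Finite.preimage hinj.injOn
      (((Set.finite_Iic R).prod ((Set.finite_Iic R).prod hZfin))))
  intro i hi
  obtain ⟨a, hfa, hda, hgeo⟩ := Gfun_ne_zero hi
  have hnR : i.1 ≤ R := hda ▸ Finset.le_sup (f := G.dist x) (Finsupp.mem_support_iff.2 hfa)
  refine ⟨hnR, le_trans (Nat.lt_succ_iff.mp i.2.1.isLt) hnR, ?_⟩
  exact Set.mem_biUnion (by simpa using Finsupp.mem_support_iff.2 hfa) hgeo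

end SqNormAux3

namespace SqNormAux4
open SimpleGraph SqNormAux SqNormAux2 SqNormAux3
variable {V : Type*}

theorem summable_F {G : SimpleGraph V} (hT : G.IsTree) (x : V) (f : V →₀ ℂ) :
    Summable (fun i : Idx G x => ‖Gfun G x f i‖ ^ 2) := by
  apply summable_of_finite_support
  apply (support_Gfun_finite hT x f).subset
  intro i hi
  simp only [Function.mem_support] at hi ⊢
  intro h0
  exact hi (by rw [h0]; simp)

noncomputable def T {G : SimpleGraph V} (hT : G.IsTree) (x : V) (f : V →₀ ℂ) :
    lp (fun _ : Idx G x => ℂ) 2 :=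
  ⟨Gfun G x f, memℓp_gen (by
    have := summable_F hT x f
    simpa [ENNReal.toReal_ofNat, Real.rpow_natCast] using this)⟩

theorem tsum_F_eq {G : SimpleGraph V} (hT : G.IsTree) (x : V) (f : V →₀ ℂ) :
    ∑' i : Idx G x, ‖Gfun G x f i‖ ^ 2 = G.sqNormH x f := by
  classical
  have hsum := summable_F hT x f
  rw [hsum.tsum_sigma]
  rw [SimpleGraph.sqNormH]
  congr 1
  funext n
  have hsum2 : Summable (fun q : Σ k : Fin (n+1), {z : V // G.dist x z = (k : ℕ)} =>
      ‖Gfun G x f ⟨n, q⟩‖ ^ 2) := hsum.sigma_factor n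
  rw [hsum2.tsum_sigma, tsum_fintype]
  rw [Finset.mul_sum]
  rw [← Fin.sum_univ_eq_sum_range (fun k => ((n:ℝ) + 1) ^ 2 *
      ∑' z : {z : V // G.dist x z = k}, ‖∑ᶠ a ∈ G.Icl x n (z : V), f a‖ ^ 2)]
  congr 1
  funext k
  rw [← tsum_mul_left]
  congr 1
  funext z
  rw [Gfun]
  rw [norm_mul, mul_pow]
  congr 2
  have : ((n : ℂ) + 1) = ((n + 1 : ℕ) : ℂ) := by push_cast; ring
  rw [this, Complex.norm_natCast]
  push_cast; ring

end SqNormAux4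

namespace SqNormAux5
open SimpleGraph SqNormAux SqNormAux2 SqNormAux3 SqNormAux4 ENNReal
variable {V : Type*}

theorem norm_T {G : SimpleGraph V} (hT : G.IsTree) (x : V) (f : V →₀ ℂ) :
    ‖T hT x f‖ = Real.sqrt (G.sqNormH x f) := by
  have hp : 0 < (2 : ℝ≥0∞).toReal := by norm_num
  rw [lp.norm_eq_tsum_rpow hp]
  have h2 : (2 : ℝ≥0∞).toReal = (2 : ℝ) := by norm_num
  rw [h2]
  have hc : ∀ i : Idx G x, ‖(T hT x f : ∀ _ : Idx G x, ℂ) i‖ ^ (2:ℝ) = ‖Gfun G x f i‖ ^ 2 := by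
    intro i
    rw [show ((2:ℝ)) = ((2:ℕ):ℝ) by norm_num, Real.rpow_natCast]
    rfl
  simp_rw [hc]
  rw [tsum_F_eq hT x f, Real.sqrt_eq_rpow]

theorem sqNormH_nonneg {G : SimpleGraph V} (hT : G.IsTree) (x : V) (f : V →₀ ℂ) :
    0 ≤ G.sqNormH x f := by
  rw [← tsum_F_eq hT x f]
  exact tsum_nonneg (fun i => by positivity)

theorem T_add {G : SimpleGraph V} (hT : G.IsTree) (x : V) (f g : V →₀ ℂ) :
    T hT x (f + g) = T hT x f + T hT x g := by
  apply lp.ext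
  rw [lp.coeFn_add]
  exact Gfun_add G x f g

theorem T_smul {G : SimpleGraph V} (hT : G.IsTree) (x : V) (c : ℂ) (f : V →₀ ℂ) :
    T hT x (c • f) = c • T hT x f := by
  apply lp.ext
  rw [lp.coeFn_smul]
  exact Gfun_smul G x c f

theorem eq_zero_of_T_eq_zero {G : SimpleGraph V} (hT : G.IsTree) (x : V) {f : V →₀ ℂ}
    (h : T hT x f = 0) : f = 0 := by
  ext a
  set n := G.dist x a with hn
  set i : Idx G x := ⟨n, ⟨n, Nat.lt_succ_self n⟩, ⟨a, rfl⟩⟩ with hi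
  have h0 : Gfun G x f i = 0 := by
    have := congrArg (fun F : lp (fun _ : Idx G x => ℂ) 2 => (F : ∀ _ : Idx G x, ℂ) i) h
    simpa [T] using this
  have hIcl : G.Icl x n a = {a} := by
    ext a'
    simp only [SimpleGraph.Icl, Set.mem_setOf_eq, Set.mem_singleton_iff]
    constructor
    · rintro ⟨h1, h2⟩
      have hd0 : G.dist a a' = 0 := by omega
      exact ((hT.isConnected.preconnected a a').dist_eq_zero_iff.mp hd0).symm
    · rintro rfl
      exact ⟨hn.symm, by simp [SimpleGraph.dist_self]⟩
  rw [Gfun] at h0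
  simp only [hi] at h0
  rw [hIcl, finsum_mem_singleton] at h0
  rcases mul_eq_zero.mp h0 with h | h
  · exact absurd h (Nat.cast_add_one_ne_zero n)
  · simpa using h

end SqNormAux5

/-- For a tree `X` with basepoint `x`, the expression
`Σ_n (n+1)² Σ_k Σ_{z ∈ S_x^k} |Σ_{a ∈ I_z^{n,k,x}} f(a)|²` is the square of a
norm on the space of finitely supported functions `X → ℂ`. -/
theorem sqNormH_is_norm {V : Type*} (G : SimpleGraph V) (hT : G.IsTree) (x : V) :
    (∀ f : V →₀ ℂ, 0 ≤ G.sqNormH x f) ∧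
    (∀ f : V →₀ ℂ, Real.sqrt (G.sqNormH x f) = 0 ↔ f = 0) ∧
    (∀ (c : ℂ) (f : V →₀ ℂ),
      Real.sqrt (G.sqNormH x (c • f)) = ‖c‖ * Real.sqrt (G.sqNormH x f)) ∧
    (∀ f g : V →₀ ℂ,
      Real.sqrt (G.sqNormH x (f + g)) ≤
        Real.sqrt (G.sqNormH x f) + Real.sqrt (G.sqNormH x g)) := by
  open SqNormAux SqNormAux2 SqNormAux3 SqNormAux4 SqNormAux5 in
  refine ⟨fun f => sqNormH_nonneg hT x f, fun f => ?_, fun c f => ?_, fun f g => ?_⟩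
  · constructor
    · intro h
      apply eq_zero_of_T_eq_zero hT x
      apply norm_eq_zero.mp
      rw [norm_T hT x f, h]
    · rintro rfl
      rw [← norm_T hT x 0]
      rw [norm_eq_zero]
      apply lp.ext
      rw [lp.coeFn_zero]
      funext i
      show Gfun G x 0 i = 0
      have h0 : ∀ a ∈ G.Icl x i.fst ((i.2.2 : {z : V // G.dist x z = (i.2.1 : ℕ)}) : V),
          (0 : V →₀ ℂ) a = 0 := fun a _ => rfl
      rw [Gfun, finsum_mem_of_eqOn_zero h0, mul_zero]
  · rw [← norm_T hT x, ← norm_T hT x, T_smul, norm_smul]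
  · rw [← norm_T hT x, ← norm_T hT x, ← norm_T hT x, T_add]
    exact norm_add_le _ _
end

section
/- Let X be a tree, x, x' vertices, k ≤ n, and z ∈ S_x^k a vertex not on the geodesic [x,x']. Then setting k' = d(x',z) and n' = n − k + k', one has I_z^{n,k,x} = I_z^{n',k',x'}. -/
namespace SimpleGraph

variable {V : Type*} {G : SimpleGraph V}

/-- `z` lies on a geodesic from `x` to `y`; in a tree, `z ∈ [x, y]`. -/
def Between (G : SimpleGraph V) (x z y : V) : Prop :=
  G.dist x z + G.dist z y = G.dist x y

lemma Between.symm {x z y : V} (h : G.Between x z y) : G.Between y z x := by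
  rw [Between, dist_comm, add_comm, dist_comm, h, dist_comm]

lemma IsAcyclic.length_eq_dist_of_isPath (hG : G.IsAcyclic) {u v : V} {p : G.Walk u v}
    (hp : p.IsPath) : p.length = G.dist u v := by
  obtain ⟨q, hq, hql⟩ := p.reachable.exists_path_of_dist
  have := hG.subsingleton_path u v
  have hpq : p = q := congrArg Subtype.val (Subsingleton.elim (⟨p, hp⟩ : G.Path u v) ⟨q, hq⟩)
  rw [hpq, hql]

lemma IsTree.mem_support_iff_between (hT : G.IsTree) {u v z : V} {p : G.Walk u v}
    (hp : p.IsPath) : z ∈ p.support ↔ G.Between u z v := by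
  classical
  have hlen : p.length = G.dist u v := hT.isAcyclic.length_eq_dist_of_isPath hp
  rw [Between]
  constructor
  · intro hz
    have hsplit : (p.takeUntil z hz).length + (p.dropUntil z hz).length = p.length := by
      rw [← Walk.length_append, p.take_spec hz]
    have htake : G.dist u z ≤ (p.takeUntil z hz).length := dist_le _
    have hdrop : G.dist z v ≤ (p.dropUntil z hz).length := dist_le _
    have htri : G.dist u v ≤ G.dist u z + G.dist z v := hT.connected.dist_triangle
    omega
  · intro hsum
    obtain ⟨p₁, -, hp₁⟩ := hT.connected.exists_path_of_dist u z
    obtain ⟨p₂, -, hp₂⟩ := hT.connected.exists_path_of_dist z v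
    have hlen₁₂ : (p₁.append p₂).length = G.dist u v := by
      rw [Walk.length_append, hp₁, hp₂, hsum]
    have heq : p = p₁.append p₂ :=
      (hT.existsUnique_path u v).unique hp (Walk.isPath_of_length_eq_dist _ hlen₁₂)
    rw [heq, Walk.mem_support_append_iff]
    exact Or.inl p₁.end_mem_support

lemma IsTree.between_of_not_between (hT : G.IsTree) {x x' z a : V}
    (hxx' : ¬ G.Between x z x') (hxa : G.Between x z a) : G.Between x' z a := by
  classical
  obtain ⟨p, hp, -⟩ := hT.connected.exists_path_of_dist x a
  obtain ⟨q, hq, -⟩ := hT.connected.exists_path_of_dist x x'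
  obtain ⟨r, hr, -⟩ := hT.connected.exists_path_of_dist x' a
  -- Every walk from `x` to `a` passes through `[x, a]`, which is its bypass.
  have hbypass : p = (q.append r).bypass :=
    (hT.existsUnique_path x a).unique hp (q.append r).bypass_isPath
  have hz : z ∈ (q.append r).support := by
    apply Walk.support_bypass_subset_support
    rw [← hbypass]
    exact (hT.mem_support_iff_between hp).2 hxa
  rcases (Walk.mem_support_append_iff q r).1 hz with hzq | hzr
  · exact absurd ((hT.mem_support_iff_between hq).1 hzq) hxx'
  · exact (hT.mem_support_iff_between hr).1 hzr

lemma IsTree.between_iff_of_not_between (hT : G.IsTree) {x x' z : V}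
    (hxx' : ¬ G.Between x z x') (a : V) : G.Between x z a ↔ G.Between x' z a :=
  ⟨hT.between_of_not_between hxx',
    hT.between_of_not_between fun h ↦ hxx' h.symm⟩

end SimpleGraph

/-- In a tree, if `z ∈ S_x^k` is not on the geodesic `[x,x']`, then with
`k' = d(x',z)` and `n' = n - k + k'` one has `I_z^{n,k,x} = I_z^{n',k',x'}`. -/
theorem class_away_from_geodesic {V : Type*} (G : SimpleGraph V) (hT : G.IsTree)
    (x x' z : V) (n k : ℕ) (hk : k ≤ n) (hz : G.dist x z = k)
    (hnot : ¬ (G.dist x z + G.dist z x' = G.dist x x')) :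
    G.Icl x n z = G.Icl x' (n - k + G.dist x' z) z := by
  ext a
  have hiff := hT.between_iff_of_not_between hnot a
  simp only [SimpleGraph.Icl, Set.mem_ofPred_eq, SimpleGraph.Between] at hiff ⊢
  constructor
  · rintro ⟨hxa, hza⟩
    have hza' := hiff.1 hza
    exact ⟨by omega, hza'⟩
  · rintro ⟨hx'a, hza'⟩
    have hza := hiff.2 hza'
    exact ⟨by omega, hza⟩
end

section
/- Let X be a tree with basepoint x and let H_x be the completion of finitely supported functions under the norm ‖f‖²_{H_x} = Σ_n (n+1)² Σ_{k=0}^n Σ_{z∈S_x^k} |Σ_{a∈I_z^{n,k,x}} f(a)|². Then the map φ: f ↦ Σ_a f(a) is a continuous linear form on H_x, with operator norm squared at most Σ_{n∈ℕ} 1/(n+1)². -/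
set_option maxHeartbeats 800000


/-- For a tree with basepoint `x`, the linear form `φ : f ↦ Σ_a f(a)` is
continuous on `H_x`, with operator norm squared at most `Σ_n 1/(n+1)²`:
`|Σ_a f(a)|² ≤ (Σ_n 1/(n+1)²) ‖f‖²_{H_x}`. -/
theorem linear_form_continuous {V : Type*} (G : SimpleGraph V) (hT : G.IsTree)
    (x : V) (f : V →₀ ℂ) :
    ‖∑ a ∈ f.support, f a‖ ^ 2 ≤
      (∑' n : ℕ, (1 : ℝ) / (n + 1) ^ 2) * G.sqNormH x f := by
  classical
  set M := f.support.sup (G.dist x) with hM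
  set S : ℕ → ℂ := fun n => ∑ a ∈ f.support.filter (fun a => G.dist x a = n), f a with hS
  -- the inner tsum terms
  set h : ℕ → ℕ → ℝ := fun n k => ∑' z : {z : V // G.dist x z = k},
      ‖∑ᶠ a ∈ G.Icl x n (z : V), f a‖ ^ 2 with hh
  set g : ℕ → ℝ := fun n => ((n + 1 : ℝ) ^ 2) * ∑ k ∈ Finset.range (n + 1), h n k with hg
  have hgnorm : G.sqNormH x f = ∑' n, g n := rfl
  -- finsum over Icl x n x equals S n
  have hIcl : ∀ n : ℕ, (∑ᶠ a ∈ G.Icl x n x, f a) = S n := by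
    intro n
    have : G.Icl x n x = {a | G.dist x a = n} := by
      ext a
      simp [SimpleGraph.Icl, SimpleGraph.dist_self]
    rw [this]
    refine finsum_mem_eq_sum_of_inter_support_eq _ ?_
    ext a
    simp only [Set.mem_inter_iff, Set.mem_setOf_eq, Function.mem_support, Finset.coe_filter,
      Finsupp.mem_support_iff]
    constructor
    · rintro ⟨hd, hfa⟩; exact ⟨⟨hfa, hd⟩, hfa⟩
    · rintro ⟨⟨hfa, hd⟩, _⟩; exact ⟨hd, hfa⟩
  have hh_nonneg : ∀ n k, 0 ≤ h n k := fun n k => tsum_nonneg (fun z => sq_nonneg _)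
  -- h n 0 = |S n|^2
  have hh0 : ∀ n, h n 0 = ‖S n‖ ^ 2 := by
    intro n
    have hx0 : G.dist x x = 0 := by simp
    have huniq : ∀ z : {z : V // G.dist x z = 0}, z = ⟨x, hx0⟩ := by
      rintro ⟨z, hz⟩
      have : z = x := (hT.isConnected.dist_eq_zero_iff (u := x) (v := z)).mp hz |>.symm
      subst this; rfl
    have := tsum_eq_single (L := SummationFilter.unconditional _) (f := fun z : {z : V // G.dist x z = 0} =>
        ‖∑ᶠ a ∈ G.Icl x n (z : V), f a‖ ^ 2) ⟨x, hx0⟩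
      (fun b' hb' => absurd (huniq b') hb')
    simpa [hh, hIcl n] using this
  -- each g n dominates (n+1)^2 |S n|^2
  have hgn : ∀ n : ℕ, ((n : ℝ) + 1) ^ 2 * ‖S n‖ ^ 2 ≤ g n := by
    intro n
    have h0mem : 0 ∈ Finset.range (n + 1) := Finset.mem_range.mpr (Nat.succ_pos n)
    have := Finset.single_le_sum (f := fun k => h n k) (fun k _ => hh_nonneg n k) h0mem
    rw [hh0 n] at this
    have hsq : (0:ℝ) ≤ ((n : ℝ) + 1) ^ 2 := sq_nonneg _
    calc ((n : ℝ) + 1) ^ 2 * ‖S n‖ ^ 2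
        ≤ ((n : ℝ) + 1) ^ 2 * ∑ k ∈ Finset.range (n + 1), h n k :=
          mul_le_mul_of_nonneg_left this hsq
      _ = g n := rfl
  -- g vanishes beyond M
  have hgzero : ∀ n ∉ Finset.range (M + 1), g n = 0 := by
    intro n hn
    rw [Finset.mem_range, not_lt] at hn
    have hzero : ∀ z : V, (∑ᶠ a ∈ G.Icl x n z, f a) = 0 := by
      intro z
      have : G.Icl x n z ∩ Function.support f =
          (↑(∅ : Finset V) : Set V) ∩ Function.support f := by
        ext a
        simp only [Set.mem_inter_iff, Function.mem_support, Finset.coe_empty,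
          Set.empty_inter, Set.mem_empty_iff_false, iff_false, not_and,
          SimpleGraph.Icl, Set.mem_setOf_eq]
        rintro ⟨hd, -⟩ hfa
        have : G.dist x a ≤ M := Finset.le_sup (Finsupp.mem_support_iff.mpr hfa)
        omega
      rw [finsum_mem_eq_sum_of_inter_support_eq _ this, Finset.sum_empty]
    have : ∀ k ∈ Finset.range (n + 1), h n k = 0 := by
      intro k _
      rw [hh]; dsimp only
      convert tsum_zero with z
      rw [hzero (z : V)]; simp
    rw [hg]; dsimp only
    rw [Finset.sum_congr rfl this]
    simp
  have hg_summable : Summable g := summable_of_ne_finset_zero hgzero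
  have hg_nonneg : ∀ n, 0 ≤ g n := by
    intro n
    by_cases hn : n ∈ Finset.range (M + 1)
    · exact le_trans (mul_nonneg (sq_nonneg _) (sq_nonneg _)) (hgn n)
    · rw [hgzero n hn]
  -- partition the sum over the support by distance
  have hpart : ∑ a ∈ f.support, f a = ∑ n ∈ Finset.range (M + 1), S n := by
    rw [hS]
    exact (Finset.sum_fiberwise_of_maps_to (fun a ha =>
      Finset.mem_range.mpr (Nat.lt_succ_of_le (Finset.le_sup ha))) f).symm
  rw [hpart]
  -- Cauchy-Schwarz
  have habs : ‖∑ n ∈ Finset.range (M + 1), S n‖ ≤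
      ∑ n ∈ Finset.range (M + 1), (1 / ((n : ℝ) + 1)) * (((n : ℝ) + 1) * ‖S n‖) := by
    refine le_trans (norm_sum_le _ _) (le_of_eq (Finset.sum_congr rfl fun n _ => ?_))
    field_simp
  have hCS := Finset.sum_mul_sq_le_sq_mul_sq (Finset.range (M + 1))
    (fun n => 1 / ((n : ℝ) + 1)) (fun n => ((n : ℝ) + 1) * ‖S n‖)
  have h1 : ‖∑ n ∈ Finset.range (M + 1), S n‖ ^ 2 ≤
      (∑ n ∈ Finset.range (M + 1), (1 / ((n : ℝ) + 1)) ^ 2) *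
        ∑ n ∈ Finset.range (M + 1), (((n : ℝ) + 1) * ‖S n‖) ^ 2 := by
    refine le_trans (pow_le_pow_left₀ (norm_nonneg _) habs 2) hCS
  refine h1.trans (mul_le_mul ?_ ?_ ?_ ?_)
  · -- partial sum of 1/(n+1)^2 ≤ tsum
    have hsum : Summable (fun n : ℕ => (1 : ℝ) / (n + 1) ^ 2) := by
      have h0 : Summable (fun n : ℕ => 1 / (n : ℝ) ^ 2) :=
        Real.summable_one_div_nat_pow.mpr one_lt_two
      exact ((summable_nat_add_iff 1).mpr h0).congr (fun n => by push_cast; ring)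
    have := Summable.sum_le_tsum (Finset.range (M + 1))
      (fun n _ => by positivity) hsum
    refine le_trans (le_of_eq ?_) this
    refine Finset.sum_congr rfl fun n _ => ?_
    rw [div_pow, one_pow]
  · -- partial sum ≤ sqNormH
    rw [hgnorm]
    have h2 : ∑ n ∈ Finset.range (M + 1), (((n : ℝ) + 1) * ‖S n‖) ^ 2 ≤
        ∑ n ∈ Finset.range (M + 1), g n := by
      refine Finset.sum_le_sum fun n _ => ?_
      rw [mul_pow]
      exact hgn n
    exact h2.trans (Summable.sum_le_tsum _ (fun n _ => hg_nonneg n) hg_summable)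
  · positivity
  · exact tsum_nonneg fun n => by positivity
end

section
/- Let X be a δ-hyperbolic fine graph, x, x', a vertices, and ã the farthest point from a lying on every geodesic [a,x] and [a,x'] with both angles > 50δ. Then for every vertex y ∈ B(x,k), where k ≤ d(x,ã) excludes y from being past ã (i.e., d(x,y) ≤ k < d(x,ã)), the point ã lies on every geodesic between a and y. -/
section Helpers

variable {V : Type*} [DecidableEq V] {G : SimpleGraph V} {v : V}

/-- A walk avoiding `v` gives a bound on the edist in `G.avoid v`. -/
lemma tog_avoid_edist_le {s t : V} (W : G.Walk s t) (hv : v ∉ W.support) :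
    (G.avoid v).edist s t ≤ (W.length : ℕ∞) := by
  induction W with
  | nil => simp [SimpleGraph.edist_self]
  | @cons s u t h W ih =>
    rw [SimpleGraph.Walk.support_cons, List.mem_cons] at hv
    push_neg at hv
    have hu : u ≠ v := fun huv => hv.2 (huv ▸ W.start_mem_support)
    have hadj : (G.avoid v).Adj s u := ⟨h, fun hsv => hv.1 hsv.symm, hu⟩
    calc (G.avoid v).edist s t ≤ (G.avoid v).edist s u + (G.avoid v).edist u t :=
          SimpleGraph.edist_triangle
      _ ≤ 1 + (W.length : ℕ∞) := by
          exact add_le_add (le_of_eq (SimpleGraph.edist_eq_one_iff_adj.mpr hadj)) (ih hv.2)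
      _ = ((W.length + 1 : ℕ) : ℕ∞) := by push_cast; ring
      _ = (((SimpleGraph.Walk.cons h W).length : ℕ) : ℕ∞) := by
          rw [SimpleGraph.Walk.length_cons]

/-- If `z` is on a walk `W : s → t`, then `d s z + d z t ≤ W.length`. -/
lemma tog_dist_add_dist_le {s t : V} (W : G.Walk s t) {z : V} (hz : z ∈ W.support) :
    G.dist s z + G.dist z t ≤ W.length := by
  have hsplit := congrArg SimpleGraph.Walk.length (W.take_spec hz)
  rw [SimpleGraph.Walk.length_append] at hsplit
  have h1 := SimpleGraph.dist_le (W.takeUntil z hz)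
  have h2 := SimpleGraph.dist_le (W.dropUntil z hz)
  omega

/-- Splitting a geodesic at a support point gives geodesics. -/
lemma tog_geodesic_split (hconn : G.Connected) {s t : V} (W : G.Walk s t)
    (hW : W.length = G.dist s t) {z : V} (hz : z ∈ W.support) :
    (W.takeUntil z hz).length = G.dist s z ∧ (W.dropUntil z hz).length = G.dist z t ∧
      G.dist s z + G.dist z t = G.dist s t := by
  have hsplit := congrArg SimpleGraph.Walk.length (W.take_spec hz)
  rw [SimpleGraph.Walk.length_append] at hsplit
  have h1 := SimpleGraph.dist_le (W.takeUntil z hz)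
  have h2 := SimpleGraph.dist_le (W.dropUntil z hz)
  have h3 := hconn.dist_triangle (u := s) (v := z) (w := t)
  omega

/-- Between two points on a geodesic there is a geodesic subwalk. -/
lemma tog_geodesic_subwalk (hconn : G.Connected) {s t : V} (W : G.Walk s t)
    (hW : W.length = G.dist s t) {z1 z2 : V} (h1 : z1 ∈ W.support) (h2 : z2 ∈ W.support) :
    ∃ W' : G.Walk z1 z2, W'.length = G.dist z1 z2 ∧ ∀ u ∈ W'.support, u ∈ W.support := by
  obtain ⟨ht, hd, _⟩ := tog_geodesic_split hconn W hW h1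
  have h2' : z2 ∈ (W.takeUntil z1 h1).support ∨ z2 ∈ (W.dropUntil z1 h1).support := by
    rw [← SimpleGraph.Walk.mem_support_append_iff, W.take_spec h1]; exact h2
  rcases h2' with h2' | h2'
  · -- z2 is on the first part; use reverse of dropUntil of takeUntil
    obtain ⟨_, hdd, _⟩ := tog_geodesic_split hconn (W.takeUntil z1 h1) ht h2'
    refine ⟨((W.takeUntil z1 h1).dropUntil z2 h2').reverse, ?_, ?_⟩
    · rw [SimpleGraph.Walk.length_reverse, hdd, SimpleGraph.dist_comm]
    · intro u hu
      rw [SimpleGraph.Walk.support_reverse, List.mem_reverse] at hu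
      exact (W.support_takeUntil_subset h1)
        ((W.takeUntil z1 h1).support_dropUntil_subset h2' hu)
  · obtain ⟨htt, _, _⟩ := tog_geodesic_split hconn (W.dropUntil z1 h1) hd h2'
    refine ⟨(W.dropUntil z1 h1).takeUntil z2 h2', htt, ?_⟩
    intro u hu
    exact (W.support_dropUntil_subset h1)
      ((W.dropUntil z1 h1).support_takeUntil_subset h2' hu)

/-- On a geodesic there is a vertex at each given distance from the start. -/
lemma tog_exists_vertex_at_dist (hconn : G.Connected) :
    ∀ {s t : V} (W : G.Walk s t), W.length = G.dist s t → ∀ i, i ≤ W.length →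
    ∃ u ∈ W.support, G.dist s u = i ∧ G.dist u t + i = W.length := by
  intro s t W
  induction W with
  | nil =>
    intro _ i hi
    simp only [SimpleGraph.Walk.length_nil, Nat.le_zero] at hi
    subst hi
    exact ⟨_, SimpleGraph.Walk.start_mem_support _, by simp, by simp⟩
  | @cons s u t h W ih =>
    intro hW i hi
    rw [SimpleGraph.Walk.length_cons] at hW hi ⊢
    match i with
    | 0 =>
      exact ⟨s, SimpleGraph.Walk.start_mem_support _, by simp, by omega⟩
    | (j+1) =>
      have hsu : G.dist s u ≤ 1 := SimpleGraph.dist_le h.toWalk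
      have h2 : G.dist s t ≤ G.dist s u + G.dist u t := hconn.dist_triangle
      have h1 : G.dist u t ≤ W.length := SimpleGraph.dist_le W
      have hW' : W.length = G.dist u t := by omega
      obtain ⟨u', hu', hd1, hd2⟩ := ih hW' j (by omega)
      refine ⟨u', by rw [SimpleGraph.Walk.support_cons]; exact List.mem_cons_of_mem _ hu', ?_, by omega⟩
      have hle : G.dist s u' ≤ G.dist s u + G.dist u u' := hconn.dist_triangle
      have hge : G.dist s t ≤ G.dist s u' + G.dist u' t := hconn.dist_triangle
      omega

end Helpers

section Main

open SimpleGraph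

/-- In a fine `δ`-hyperbolic graph, let `ã` be a point lying on every geodesic
`[a,x]` and `[a,x']` with `∠_ã(a,x) > 50δ` and `∠_ã(a,x') > 50δ`. Then for every
vertex `y ∈ B(x,k)` with `k < d(x,ã)`, the point `ã` lies on every geodesic
between `a` and `y`. -/
theorem tilde_on_every_geodesic {V : Type*} (G : SimpleGraph V) (hc : G.Connected)
    (hf : G.Fine) (δ : ℕ) (hδ : G.SlimTriangles δ) (a x x' ta : V)
    (hta : G.BigAnglePt δ a x x' ta) (k : ℕ) (hk : k < G.dist x ta) :
    ∀ y : V, G.dist x y ≤ k →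
      ∀ p : G.Walk a y, p.length = G.dist a y → ta ∈ p.support := by
  classical
  obtain ⟨hgx, -, hAx, -⟩ := hta
  obtain ⟨w, w', hvw, hvw', hwa, hw'x, hang⟩ := hAx
  simp only [SimpleGraph.angle] at hang
  intro y hxy p hp
  by_contra hv
  -- distance bookkeeping
  have hcom1 : G.dist ta x = G.dist x ta := SimpleGraph.dist_comm
  have hcom2 : G.dist y x = G.dist x y := SimpleGraph.dist_comm
  have hcom3 : G.dist a ta = G.dist ta a := SimpleGraph.dist_comm
  -- geodesic q : y → x avoiding ta
  obtain ⟨q, hq⟩ := hc.exists_walk_length_eq_dist y x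
  have hqv : ta ∉ q.support := by
    intro hmem
    have h1 := tog_dist_add_dist_le q hmem
    omega
  -- a geodesic a → x through ta
  obtain ⟨r0, hr0⟩ := hc.exists_walk_length_eq_dist a x
  have hta0 : ta ∈ r0.support := hgx r0 hr0
  obtain ⟨-, -, hd_ax⟩ := tog_geodesic_split hc r0 hr0 hta0
  rcases Nat.eq_zero_or_pos δ with hδ0 | hδ1
  · -- δ = 0
    subst hδ0
    obtain ⟨z, hz, hdz⟩ := hδ a y x p q r0 hp hq hr0 ta hta0
    have hz0 : ta = z := ((hc ta z).dist_eq_zero_iff).mp (Nat.le_zero.mp hdz)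
    rw [← hz0] at hz
    rcases hz with hz | hz
    · exact hv hz
    · exact hqv hz
  · -- δ ≥ 1
    obtain ⟨ga, hga⟩ := hc.exists_walk_length_eq_dist w a
    obtain ⟨gx, hgxl⟩ := hc.exists_walk_length_eq_dist w' x
    set r' : G.Walk a x :=
      ga.reverse.append (Walk.cons hvw.symm (Walk.cons hvw' gx)) with hr'def
    have hr' : r'.length = G.dist a x := by
      rw [hr'def]
      simp only [Walk.length_append, Walk.length_reverse, Walk.length_cons]
      omega
    have hwta : w ≠ ta := fun h => hvw.ne h.symm
    have hw'ta : w' ≠ ta := fun h => hvw'.ne h.symm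
    -- Side 1 : from w to a point z1 on p ∪ q
    have hside1 : ∃ z1, (z1 ∈ p.support ∨ z1 ∈ q.support) ∧
        (G.avoid ta).edist w z1 ≤ ((2*δ+1 : ℕ) : ℕ∞) ∧ G.dist ta z1 ≤ 2*δ+2 := by
      by_cases hlong : δ + 1 ≤ G.dist w a
      · obtain ⟨u1, hu1mem, hwd, hda⟩ := tog_exists_vertex_at_dist hc ga hga (δ+1) (by omega)
        rw [hga] at hda
        have htaw : G.dist ta w ≤ 1 := SimpleGraph.dist_le hvw.toWalk
        have hta_u1 : G.dist ta u1 = δ + 2 := by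
          have h1 : G.dist ta u1 ≤ G.dist ta w + G.dist w u1 := hc.dist_triangle
          have h2 : G.dist ta a ≤ G.dist ta u1 + G.dist u1 a := hc.dist_triangle
          omega
        have hu1r' : u1 ∈ r'.support := by
          rw [hr'def, Walk.mem_support_append_iff]
          left
          rw [Walk.support_reverse, List.mem_reverse]
          exact hu1mem
        obtain ⟨z1, hz1, hdz1⟩ := hδ a y x p q r' hp hq hr' u1 hu1r'
        refine ⟨z1, hz1, ?_, ?_⟩
        · obtain ⟨W1, hW1⟩ := hc.exists_walk_length_eq_dist w u1
          have hW1v : ta ∉ W1.support := by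
            intro hmem
            have h1 := tog_dist_add_dist_le W1 hmem
            have h2 : 0 < G.dist w ta := hc.pos_dist_of_ne hwta
            have h3 : G.dist ta u1 = G.dist u1 ta := SimpleGraph.dist_comm
            omega
          obtain ⟨W2, hW2⟩ := hc.exists_walk_length_eq_dist u1 z1
          have hW2v : ta ∉ W2.support := by
            intro hmem
            have h1 := tog_dist_add_dist_le W2 hmem
            have h3 : G.dist ta u1 = G.dist u1 ta := SimpleGraph.dist_comm
            omega
          calc (G.avoid ta).edist w z1
              ≤ (G.avoid ta).edist w u1 + (G.avoid ta).edist u1 z1 :=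
                SimpleGraph.edist_triangle
            _ ≤ (W1.length : ℕ∞) + (W2.length : ℕ∞) :=
                add_le_add (tog_avoid_edist_le W1 hW1v) (tog_avoid_edist_le W2 hW2v)
            _ ≤ ((2*δ+1 : ℕ) : ℕ∞) := by
                rw [← Nat.cast_add]
                exact Nat.cast_le.mpr (by omega)
        · have h1 : G.dist ta z1 ≤ G.dist ta u1 + G.dist u1 z1 := hc.dist_triangle
          omega
      · -- short case: use a itself
        have hgav : ta ∉ ga.support := by
          intro hmem
          have h1 := tog_dist_add_dist_le ga hmem
          omega
        refine ⟨a, Or.inl p.start_mem_support, ?_, by omega⟩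
        calc (G.avoid ta).edist w a ≤ (ga.length : ℕ∞) := tog_avoid_edist_le ga hgav
          _ ≤ ((2*δ+1 : ℕ) : ℕ∞) := Nat.cast_le.mpr (by omega)
    -- Side 2 : from w' to a point z2 on p ∪ q
    have hside2 : ∃ z2, (z2 ∈ p.support ∨ z2 ∈ q.support) ∧
        (G.avoid ta).edist w' z2 ≤ ((2*δ+1 : ℕ) : ℕ∞) ∧ G.dist ta z2 ≤ 2*δ+2 := by
      by_cases hlong : δ + 1 ≤ G.dist w' x
      · obtain ⟨u2, hu2mem, hwd, hdx⟩ := tog_exists_vertex_at_dist hc gx hgxl (δ+1) (by omega)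
        rw [hgxl] at hdx
        have htaw : G.dist ta w' ≤ 1 := SimpleGraph.dist_le hvw'.toWalk
        have hta_u2 : G.dist ta u2 = δ + 2 := by
          have h1 : G.dist ta u2 ≤ G.dist ta w' + G.dist w' u2 := hc.dist_triangle
          have h2 : G.dist ta x ≤ G.dist ta u2 + G.dist u2 x := hc.dist_triangle
          omega
        have hu2r' : u2 ∈ r'.support := by
          rw [hr'def, Walk.mem_support_append_iff]
          right
          rw [Walk.support_cons, Walk.support_cons]
          exact List.mem_cons_of_mem _ (List.mem_cons_of_mem _ hu2mem)
        obtain ⟨z2, hz2, hdz2⟩ := hδ a y x p q r' hp hq hr' u2 hu2r'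
        refine ⟨z2, hz2, ?_, ?_⟩
        · obtain ⟨W1, hW1⟩ := hc.exists_walk_length_eq_dist w' u2
          have hW1v : ta ∉ W1.support := by
            intro hmem
            have h1 := tog_dist_add_dist_le W1 hmem
            have h2 : 0 < G.dist w' ta := hc.pos_dist_of_ne hw'ta
            have h3 : G.dist ta u2 = G.dist u2 ta := SimpleGraph.dist_comm
            omega
          obtain ⟨W2, hW2⟩ := hc.exists_walk_length_eq_dist u2 z2
          have hW2v : ta ∉ W2.support := by
            intro hmem
            have h1 := tog_dist_add_dist_le W2 hmem
            have h3 : G.dist ta u2 = G.dist u2 ta := SimpleGraph.dist_comm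
            omega
          calc (G.avoid ta).edist w' z2
              ≤ (G.avoid ta).edist w' u2 + (G.avoid ta).edist u2 z2 :=
                SimpleGraph.edist_triangle
            _ ≤ (W1.length : ℕ∞) + (W2.length : ℕ∞) :=
                add_le_add (tog_avoid_edist_le W1 hW1v) (tog_avoid_edist_le W2 hW2v)
            _ ≤ ((2*δ+1 : ℕ) : ℕ∞) := by
                rw [← Nat.cast_add]
                exact Nat.cast_le.mpr (by omega)
        · have h1 : G.dist ta z2 ≤ G.dist ta u2 + G.dist u2 z2 := hc.dist_triangle
          omega
      · -- short case: use x itself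
        have hgxv : ta ∉ gx.support := by
          intro hmem
          have h1 := tog_dist_add_dist_le gx hmem
          omega
        refine ⟨x, Or.inr q.end_mem_support, ?_, by omega⟩
        calc (G.avoid ta).edist w' x ≤ (gx.length : ℕ∞) := tog_avoid_edist_le gx hgxv
          _ ≤ ((2*δ+1 : ℕ) : ℕ∞) := Nat.cast_le.mpr (by omega)
    -- points of q close to ta are close to y
    have hq_close : ∀ z ∈ q.support, G.dist ta z ≤ 2*δ+2 → G.dist y z ≤ 2*δ+1 := by
      intro z hzq hzd
      obtain ⟨-, -, hsplit⟩ := tog_geodesic_split hc q hq hzq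
      have h1 : G.dist ta x ≤ G.dist ta z + G.dist z x := hc.dist_triangle
      omega
    -- Middle estimate
    have hmid : ∀ z1 z2, (z1 ∈ p.support ∨ z1 ∈ q.support) →
        (z2 ∈ p.support ∨ z2 ∈ q.support) →
        G.dist ta z1 ≤ 2*δ+2 → G.dist ta z2 ≤ 2*δ+2 →
        (G.avoid ta).edist z1 z2 ≤ ((8*δ+6 : ℕ) : ℕ∞) := by
      intro z1 z2 hz1 hz2 f1 f2
      have hd12 : G.dist z1 z2 ≤ 4*δ+4 := by
        have h1 : G.dist z1 z2 ≤ G.dist z1 ta + G.dist ta z2 := hc.dist_triangle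
        have h2 : G.dist z1 ta = G.dist ta z1 := SimpleGraph.dist_comm
        omega
      rcases hz1 with hz1 | hz1 <;> rcases hz2 with hz2 | hz2
      · -- both on p
        obtain ⟨W, hWl, hWs⟩ := tog_geodesic_subwalk hc p hp hz1 hz2
        have hWv : ta ∉ W.support := fun hmem => hv (hWs ta hmem)
        calc (G.avoid ta).edist z1 z2 ≤ (W.length : ℕ∞) := tog_avoid_edist_le W hWv
          _ ≤ ((8*δ+6 : ℕ) : ℕ∞) := Nat.cast_le.mpr (by omega)
      · -- z1 on p, z2 on q
        have hz2y : G.dist y z2 ≤ 2*δ+1 := hq_close z2 hz2 f2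
        obtain ⟨-, hdrop, hsp⟩ := tog_geodesic_split hc p hp hz1
        obtain ⟨htake, -, hsq⟩ := tog_geodesic_split hc q hq hz2
        have hz1y : G.dist z1 y ≤ 6*δ+5 := by
          have h1 : G.dist z1 y ≤ G.dist z1 z2 + G.dist z2 y := hc.dist_triangle
          have h2 : G.dist z2 y = G.dist y z2 := SimpleGraph.dist_comm
          omega
        have hW1v : ta ∉ (p.dropUntil z1 hz1).support :=
          fun hmem => hv (p.support_dropUntil_subset hz1 hmem)
        have hW2v : ta ∉ (q.takeUntil z2 hz2).support :=
          fun hmem => hqv (q.support_takeUntil_subset hz2 hmem)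
        calc (G.avoid ta).edist z1 z2
            ≤ (G.avoid ta).edist z1 y + (G.avoid ta).edist y z2 := SimpleGraph.edist_triangle
          _ ≤ ((p.dropUntil z1 hz1).length : ℕ∞) + ((q.takeUntil z2 hz2).length : ℕ∞) :=
              add_le_add (tog_avoid_edist_le _ hW1v) (tog_avoid_edist_le _ hW2v)
          _ ≤ ((8*δ+6 : ℕ) : ℕ∞) := by
              rw [← Nat.cast_add]
              exact Nat.cast_le.mpr (by omega)
      · -- z1 on q, z2 on p
        have hz1y : G.dist y z1 ≤ 2*δ+1 := hq_close z1 hz1 f1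
        obtain ⟨htake, -, hsq⟩ := tog_geodesic_split hc q hq hz1
        obtain ⟨-, hdrop, hsp⟩ := tog_geodesic_split hc p hp hz2
        have hz2y : G.dist z2 y ≤ 6*δ+5 := by
          have h1 : G.dist z2 y ≤ G.dist z2 z1 + G.dist z1 y := hc.dist_triangle
          have h2 : G.dist z2 z1 = G.dist z1 z2 := SimpleGraph.dist_comm
          have h3 : G.dist z1 y = G.dist y z1 := SimpleGraph.dist_comm
          omega
        have hW1v : ta ∉ ((q.takeUntil z1 hz1).reverse).support := by
          rw [Walk.support_reverse, List.mem_reverse]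
          exact fun hmem => hqv (q.support_takeUntil_subset hz1 hmem)
        have hW2v : ta ∉ ((p.dropUntil z2 hz2).reverse).support := by
          rw [Walk.support_reverse, List.mem_reverse]
          exact fun hmem => hv (p.support_dropUntil_subset hz2 hmem)
        calc (G.avoid ta).edist z1 z2
            ≤ (G.avoid ta).edist z1 y + (G.avoid ta).edist y z2 := SimpleGraph.edist_triangle
          _ ≤ (((q.takeUntil z1 hz1).reverse).length : ℕ∞) +
              (((p.dropUntil z2 hz2).reverse).length : ℕ∞) :=
              add_le_add (tog_avoid_edist_le _ hW1v) (tog_avoid_edist_le _ hW2v)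
          _ ≤ ((8*δ+6 : ℕ) : ℕ∞) := by
              rw [← Nat.cast_add]
              refine Nat.cast_le.mpr ?_
              rw [Walk.length_reverse, Walk.length_reverse]
              have h3 : G.dist z2 y = G.dist y z2 := SimpleGraph.dist_comm
              omega
      · -- both on q
        obtain ⟨W, hWl, hWs⟩ := tog_geodesic_subwalk hc q hq hz1 hz2
        have hWv : ta ∉ W.support := fun hmem => hqv (hWs ta hmem)
        calc (G.avoid ta).edist z1 z2 ≤ (W.length : ℕ∞) := tog_avoid_edist_le W hWv
          _ ≤ ((8*δ+6 : ℕ) : ℕ∞) := Nat.cast_le.mpr (by omega)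
    -- put everything together
    obtain ⟨z1, hz1, e1, f1⟩ := hside1
    obtain ⟨z2, hz2, e2, f2⟩ := hside2
    have emid := hmid z1 z2 hz1 hz2 f1 f2
    have hfinal : (G.avoid ta).edist w w' ≤ ((12*δ+8 : ℕ) : ℕ∞) := by
      calc (G.avoid ta).edist w w'
          ≤ (G.avoid ta).edist w z1 + (G.avoid ta).edist z1 w' := SimpleGraph.edist_triangle
        _ ≤ (G.avoid ta).edist w z1 +
            ((G.avoid ta).edist z1 z2 + (G.avoid ta).edist z2 w') :=
            add_le_add le_rfl SimpleGraph.edist_triangle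
        _ ≤ ((2*δ+1 : ℕ) : ℕ∞) + (((8*δ+6 : ℕ) : ℕ∞) + ((2*δ+1 : ℕ) : ℕ∞)) := by
            refine add_le_add e1 (add_le_add emid ?_)
            rw [SimpleGraph.edist_comm]
            exact e2
        _ = ((12*δ+8 : ℕ) : ℕ∞) := by
            rw [← Nat.cast_add, ← Nat.cast_add]
            congr 1
            omega
    have hlt : ((50*δ : ℕ) : ℕ∞) < ((12*δ+8 : ℕ) : ℕ∞) := lt_of_lt_of_le hang hfinal
    rw [Nat.cast_lt] at hlt
    omega


end Main
end
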